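/- arXiv:1409.0834 — 5 statements merged into one kernel-verified Lean document; each statement's English description precedes it below -/
import Mathlib

section
/- Let (W,S) be a Coxeter system with generators s_i indexed by a set B. Let i_1,…,i_k ∈ B (k ≥ 2) be pairwise distinct indices such that s_{i_j} and s_{i_{j+1}} do not commute for each 1 ≤ j < k, while s_{i_j} and s_{i_l} commute whenever |j − l| ≥ 2 (so i_1,…,i_k are the vertices, in order, of a path in the Coxeter diagram). Then the word obtained by concatenating (i_1,…,i_k) and (i_1,…,i_{k−1}) is reduced; that is, ℓ( (s_{i_1}⋯s_{i_k})·(s_{i_1}⋯s_{i_{k−1}}) ) = 2k − 1. -/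
/-!
Induct on the length of the path. Appending a vertex `b` to a path ending in `c` turns the
element `w` of the old word into `w * s b * s c`, since `s b` commutes with the generators of the
path before `c`; so it suffices that both right multiplications raise the length.

Tits' permutation representation on `W × ZMod 2` shows that the parity of the number of
occurrences of a reflection in the right inversion sequence of a word depends only on the
element, and that this parity is odd for `s i` whenever `ℓ (w * s i) < ℓ w`. Now `w` is a
product of generators other than `s b`, so in the geometric representation every entry of its
right inversion sequence fixes the `b`-th coordinate, whereas `s b` and `s b * s c * s b` move
it (the latter because `cos (π / M b c) ≠ 0`). Hence neither occurs, and both lengths go up.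
-/

open Real Polynomial.Chebyshev in
/-- For `m ≥ 3` the point `2 cos (2π / m)` is a common zero of both coefficients in
`Module.reflection_mul_reflection_pow_apply`, because `S_n (2 cos φ) sin φ = sin ((n + 1) φ)`. -/
lemma Polynomial.Chebyshev.S_mul_S_add_S_eval_two_mul_cos_eq_zero {m : ℕ} (hm : 3 ≤ m) :
    let t := 2 * cos (2 * π / m)
    (S ℝ ((m - 2) / 2 : ℤ)).eval t * ((S ℝ ((m - 1) / 2 : ℤ)).eval t +
      (S ℝ ((m - 3) / 2 : ℤ)).eval t) = 0 ∧
    (S ℝ ((m - 1) / 2 : ℤ)).eval t * ((S ℝ (m / 2 : ℤ)).eval t +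
      (S ℝ ((m - 2) / 2 : ℤ)).eval t) = 0 := by
  intro t
  set φ := 2 * π / m with hφ
  have hmr : (3 : ℝ) ≤ m := by exact_mod_cast hm
  have hsin : sin φ ≠ 0 := by
    refine (sin_pos_of_pos_of_lt_pi (by positivity) ?_).ne'
    rw [hφ, div_lt_iff₀ (by positivity)]
    nlinarith [pi_pos]
  have hmφ : (m : ℝ) * φ = 2 * π := by rw [hφ]; field_simp
  have hS (n : ℤ) : (S ℝ n).eval t = sin ((n + 1) * φ) / sin φ := by
    rw [eq_div_iff hsin]; exact S_two_mul_real_cos φ n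
  obtain ⟨n, rfl | rfl⟩ := Nat.even_or_odd' m
  · push_cast at hmφ ⊢
    have hzero : (S ℝ (n - 1 : ℤ)).eval t = 0 := by
      rw [hS]; push_cast
      rw [show ((n : ℝ) - 1 + 1) * φ = π by linarith, sin_pi, zero_div]
    rw [show (2 * n - 2 : ℤ) / 2 = n - 1 by omega, show (2 * n - 1 : ℤ) / 2 = n - 1 by omega]
    simp [hzero]
  · push_cast at hmφ ⊢
    have hzero : (S ℝ n).eval t + (S ℝ (n - 1 : ℤ)).eval t = 0 := by
      rw [hS, hS, ← add_div, div_eq_zero_iff]; left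
      push_cast
      rw [show ((n : ℝ) + 1) * φ = 2 * π - (n - 1 + 1) * φ by linarith, sin_two_pi_sub]
      ring
    rw [show (2 * n + 1 - 2 : ℤ) / 2 = n - 1 by omega,
      show (2 * n + 1 - 1 : ℤ) / 2 = n by omega, show (2 * n + 1 - 3 : ℤ) / 2 = n - 1 by omega,
      show (2 * n + 1 : ℤ) / 2 = n by omega]
    simp [hzero]

namespace CoxeterMatrix

open Real Polynomial.Chebyshev

variable {B : Type*} (M : CoxeterMatrix B)

/-- For `M a b = 0` Lean's `π / 0 = 0` gives the usual value `-1`. -/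
noncomputable def titsForm (a b : B) : ℝ := -cos (π / M a b)

lemma titsForm_self (a : B) : M.titsForm a a = 1 := by simp [titsForm]

lemma titsForm_comm (a b : B) : M.titsForm a b = M.titsForm b a := by
  rw [titsForm, titsForm, M.symmetric]

lemma titsForm_eq_zero {a b : B} (h : M a b = 2) : M.titsForm a b = 0 := by
  simp [titsForm, h]

lemma titsForm_ne_zero {a b : B} (h : M a b ≠ 2) : M.titsForm a b ≠ 0 := by
  rw [titsForm, neg_ne_zero]
  rcases Nat.lt_or_ge (M a b) 3 with hm | hm
  · interval_cases hm : M a b <;> simp_all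
  · have hpos : 0 < π / M a b := div_pos pi_pos (by positivity)
    refine (cos_pos_of_mem_Ioo ⟨by linarith [pi_pos], ?_⟩).ne'
    rw [div_lt_div_iff_of_pos_left pi_pos (by positivity) two_pos]
    exact_mod_cast (by omega : 2 < M a b)

noncomputable def titsCoroot (a : B) : Module.Dual ℝ (B →₀ ℝ) :=
  2 • Finsupp.linearCombination ℝ (M.titsForm a)

lemma titsCoroot_single (a b : B) (x : ℝ) :
    M.titsCoroot a (Finsupp.single b x) = 2 * (x * M.titsForm a b) := by
  simp [titsCoroot]

lemma titsCoroot_single_self (a : B) : M.titsCoroot a (Finsupp.single a 1) = 2 := by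
  simp [titsCoroot_single, titsForm_self]

noncomputable def geomReflection (a : B) : (B →₀ ℝ) ≃ₗ[ℝ] (B →₀ ℝ) :=
  Module.reflection (M.titsCoroot_single_self a)

lemma geomReflection_apply (a : B) (v : B →₀ ℝ) :
    M.geomReflection a v = v - M.titsCoroot a v • Finsupp.single a 1 :=
  Module.reflection_apply v _

lemma geomReflection_mul_self (a : B) : M.geomReflection a * M.geomReflection a = 1 :=
  mul_eq_one_iff_eq_inv.mpr rfl

lemma commute_geomReflection {a b : B} (h : M a b = 2) :
    Commute (M.geomReflection a) (M.geomReflection b) := by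
  have hab : M.titsForm a b = 0 := M.titsForm_eq_zero h
  have hba : M.titsForm b a = 0 := by rwa [titsForm_comm]
  refine LinearEquiv.ext fun v => ?_
  simp only [LinearEquiv.mul_apply, geomReflection_apply, map_sub, map_smul, titsCoroot_single,
    hab, hba]
  module

lemma geomReflection_mul_pow (a b : B) :
    (M.geomReflection a * M.geomReflection b) ^ M a b = 1 := by
  rcases eq_or_ne a b with rfl | hab
  · rw [M.diagonal, pow_one, geomReflection_mul_self]
  have h1 : M a b ≠ 1 := M.off_diagonal a b hab
  rcases Nat.lt_or_ge (M a b) 3 with hm | hm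
  · interval_cases hval : M a b
    · exact pow_zero _
    · exact absurd rfl h1
    · rw [(M.commute_geomReflection hval).mul_pow, sq, sq, geomReflection_mul_self,
        geomReflection_mul_self, one_mul]
  refine LinearEquiv.ext fun v => ?_
  have ht : 2 * cos (2 * π / M a b) =
      M.titsCoroot a (Finsupp.single b 1) * M.titsCoroot b (Finsupp.single a 1) - 2 := by
    rw [titsCoroot_single, titsCoroot_single, titsForm_comm M b a, titsForm, mul_div_assoc,
      cos_two_mul]
    ring
  obtain ⟨h₁, h₂⟩ := S_mul_S_add_S_eval_two_mul_cos_eq_zero hm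
  rw [geomReflection, geomReflection,
    Module.reflection_mul_reflection_pow_apply _ _ _ _ _ ht, h₁, h₂]
  simp

end CoxeterMatrix

namespace CoxeterSystem

variable {B : Type*} {W : Type*} [Group W] {M : CoxeterMatrix B} (cs : CoxeterSystem M W)

local prefix:100 "s" => cs.simple
local prefix:100 "π" => cs.wordProd
local prefix:100 "ℓ" => cs.length
local prefix:100 "ris" => cs.rightInvSeq

lemma commute_simple_of_eq_two {i j : B} (h : M i j = 2) : Commute (s i) (s j) := by
  have hsq := cs.simple_mul_simple_pow i j
  rwa [h, sq, mul_eq_one_iff_eq_inv, mul_inv_rev, inv_simple, inv_simple] at hsq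

noncomputable def geomRep : W →* ((B →₀ ℝ) ≃ₗ[ℝ] (B →₀ ℝ)) :=
  cs.lift ⟨M.geomReflection, fun a b => M.geomReflection_mul_pow a b⟩

lemma geomRep_simple (a : B) : cs.geomRep (s a) = M.geomReflection a :=
  cs.lift_apply_simple _ a

noncomputable def coordStabilizer (b : B) : Subgroup W where
  carrier := {w | ∀ v, cs.geomRep w v b = v b}
  mul_mem' {w w'} hw hw' v := by rw [map_mul, LinearEquiv.mul_apply, hw, hw']
  one_mem' v := by rw [map_one]; rfl
  inv_mem' {w} hw v := by
    have := hw (cs.geomRep w⁻¹ v)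
    rwa [← LinearEquiv.mul_apply, ← map_mul, mul_inv_cancel, map_one, eq_comm] at this

lemma simple_mem_coordStabilizer {a b : B} (h : a ≠ b) : s a ∈ cs.coordStabilizer b := by
  intro v
  rw [geomRep_simple, M.geomReflection_apply, Finsupp.sub_apply, Finsupp.smul_apply,
    Finsupp.single_eq_of_ne h.symm, smul_zero, sub_zero]

lemma wordProd_mem_coordStabilizer {b : B} {σ : List B} (h : b ∉ σ) :
    π σ ∈ cs.coordStabilizer b := by
  refine Subgroup.list_prod_mem _ fun w hw => ?_
  obtain ⟨a, ha, rfl⟩ := List.mem_map.mp hw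
  exact cs.simple_mem_coordStabilizer (ne_of_mem_of_not_mem ha h)

lemma rightInvSeq_subset_coordStabilizer {b : B} {σ : List B} (h : b ∉ σ) :
    ∀ t ∈ ris σ, t ∈ cs.coordStabilizer b := by
  induction σ with
  | nil => simp [rightInvSeq]
  | cons a σ ih =>
    simp only [List.mem_cons, not_or] at h
    intro t ht
    rw [rightInvSeq, List.mem_cons] at ht
    rcases ht with rfl | ht
    · have hσ := cs.wordProd_mem_coordStabilizer h.2
      exact mul_mem (mul_mem (inv_mem hσ) (cs.simple_mem_coordStabilizer (Ne.symm h.1))) hσ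
    · exact ih h.2 t ht

lemma simple_notMem_coordStabilizer (b : B) : s b ∉ cs.coordStabilizer b := fun h => by
  have := h (Finsupp.single b 1)
  rw [geomRep_simple, M.geomReflection_apply, M.titsCoroot_single_self] at this
  norm_num at this

lemma mul_simple_mul_notMem_coordStabilizer {b c : B} (h : ¬Commute (s b) (s c)) :
    s b * s c * s b ∉ cs.coordStabilizer b := fun hmem => by
  have hbc : b ≠ c := by rintro rfl; exact h (Commute.refl _)
  have hκ : M.titsForm b c ≠ 0 :=
    M.titsForm_ne_zero fun h2 => h (cs.commute_simple_of_eq_two h2)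
  -- the `b`-th coordinate of `s b * s c * s b` applied to `e_b` is `1 - 4 (titsForm b c)²`
  have := hmem (Finsupp.single b 1)
  simp only [map_mul, LinearEquiv.mul_apply, geomRep_simple, M.geomReflection_apply, map_sub,
    map_smul, M.titsCoroot_single, M.titsForm_self, M.titsForm_comm c b, Finsupp.sub_apply,
    Finsupp.smul_apply, Finsupp.single_eq_same, Finsupp.single_eq_of_ne hbc, smul_eq_mul] at this
  exact hκ (by nlinarith)

section Parity

open scoped Classical

/-- The action of `s i` in Tits' permutation representation. -/
noncomputable def parityAction (i : B) : Function.End (W × ZMod 2) :=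
  fun p => (s i * p.1 * s i, p.2 + if p.1 = s i then 1 else 0)

lemma parityAction_mul_pow (i j : B) (r : ℕ) (p : W × ZMod 2) :
    ((cs.parityAction i * cs.parityAction j) ^ r) p =
      ((s i * s j) ^ r * p.1 * (s j * s i) ^ r,
        p.2 + ∑ q ∈ Finset.range (2 * r), if p.1 = (s j * s i) ^ q * s j then 1 else 0) := by
  have hconj (g t z : W) : g * t * g⁻¹ = z ↔ t = g⁻¹ * z * g := by
    constructor <;> rintro rfl <;> group
  have hinv (r : ℕ) : ((s i * s j) ^ r)⁻¹ = (s j * s i) ^ r := by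
    rw [← inv_pow, mul_inv_rev, inv_simple, inv_simple]
  have hsemi (r : ℕ) : s j * (s i * s j) ^ r = (s j * s i) ^ r * s j :=
    (SemiconjBy.pow_right (by simp only [SemiconjBy, mul_assoc]) r).eq
  induction r with
  | zero =>
    simp only [pow_zero, one_mul, mul_one, mul_zero, Finset.range_zero, Finset.sum_empty,
      add_zero]
    rfl
  | succ r ih =>
    rw [pow_succ']
    obtain ⟨t, ε⟩ := p
    change cs.parityAction i (cs.parityAction j
      (((cs.parityAction i * cs.parityAction j) ^ r) (t, ε))) = _
    rw [ih]
    simp only [parityAction]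
    have h₁ : (s i * s j) ^ r * t * (s j * s i) ^ r = s j ↔ t = (s j * s i) ^ (2 * r) * s j := by
      rw [← hinv, hconj, hinv, two_mul, pow_add, mul_assoc, hsemi, mul_assoc]
    have h₂ : s j * ((s i * s j) ^ r * t * (s j * s i) ^ r) * s j = s i ↔
        t = (s j * s i) ^ (2 * r + 1) * s j := by
      have hg : ((s j * (s i * s j) ^ r))⁻¹ = (s j * s i) ^ r * s j := by
        rw [mul_inv_rev, hinv, inv_simple]
      rw [← hinv, show ∀ g : W, s j * (g * t * g⁻¹) * s j = (s j * g) * t * (s j * g)⁻¹ by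
        intro g; rw [mul_inv_rev, inv_simple]; group, hconj, hg, hsemi,
        show 2 * r + 1 = r + 1 + r by ring, pow_add, pow_succ]
      simp only [mul_assoc]
    refine Prod.ext ?_ ?_
    · rw [pow_succ' (s i * s j), pow_succ (s j * s i)]
      simp only [mul_assoc]
    · simp only [h₁, h₂, show 2 * (r + 1) = 2 * r + 1 + 1 by ring, Finset.sum_range_succ]
      ring

lemma isLiftable_parityAction : M.IsLiftable cs.parityAction := fun i j => by
  funext p
  rw [parityAction_mul_pow, cs.simple_mul_simple_pow, cs.simple_mul_simple_pow', one_mul, mul_one,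
    two_mul, Finset.sum_range_add]
  simp only [pow_add, cs.simple_mul_simple_pow', one_mul, CharTwo.add_self_eq_zero, add_zero]
  rfl

noncomputable def parityRep : W →* Function.End (W × ZMod 2) :=
  cs.lift ⟨cs.parityAction, cs.isLiftable_parityAction⟩

lemma parityRep_simple (i : B) : cs.parityRep (s i) = cs.parityAction i :=
  cs.lift_apply_simple _ i

lemma parityRep_wordProd (σ : List B) (t : W) (ε : ZMod 2) :
    cs.parityRep (π σ) (t, ε) = (π σ * t * (π σ)⁻¹, ε + (ris σ).count t) := by
  induction σ generalizing t ε with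
  | nil =>
    simp only [wordProd_nil, map_one, one_mul, inv_one, mul_one, rightInvSeq, List.count_nil,
      Nat.cast_zero, add_zero]
    rfl
  | cons i σ ih =>
    rw [wordProd_cons, map_mul]
    change cs.parityRep (s i) (cs.parityRep (π σ) (t, ε)) = _
    rw [ih, parityRep_simple, parityAction, rightInvSeq, List.count_cons]
    have hconj : π σ * t * (π σ)⁻¹ = s i ↔ (π σ)⁻¹ * s i * π σ = t := by
      constructor <;> intro h <;> rw [← h] <;> group
    refine Prod.ext ?_ ?_
    · simp only [mul_inv_rev, inv_simple, mul_assoc]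
    · simp only [hconj, beq_iff_eq]
      push_cast
      ring

noncomputable def rightInvParity (w t : W) : ZMod 2 := (cs.parityRep w (t, 0)).2

lemma rightInvParity_wordProd (σ : List B) (t : W) :
    cs.rightInvParity (π σ) t = (ris σ).count t := by
  rw [rightInvParity, parityRep_wordProd, zero_add]

lemma parityRep_apply_snd (w t : W) (ε : ZMod 2) :
    (cs.parityRep w (t, ε)).2 = ε + cs.rightInvParity w t := by
  obtain ⟨σ, rfl⟩ := cs.wordProd_surjective w
  rw [rightInvParity_wordProd, parityRep_wordProd]

lemma rightInvParity_mul_simple (w : W) (i : B) (t : W) :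
    cs.rightInvParity (w * s i) t =
      (if t = s i then 1 else 0) + cs.rightInvParity w (s i * t * s i) := by
  rw [rightInvParity, map_mul]
  change (cs.parityRep w (cs.parityRep (s i) (t, 0))).2 = _
  rw [parityRep_simple, parityAction, parityRep_apply_snd, zero_add]

lemma length_mul_simple_of_rightInvParity_eq_zero {w : W} {i : B}
    (h : cs.rightInvParity w (s i) = 0) : ℓ (w * s i) = ℓ w + 1 := by
  refine (cs.length_mul_simple w i).resolve_right fun hlt => ?_
  obtain ⟨σ, hσ, hσw⟩ := cs.exists_isReduced (w * s i)
  have hnotMem : s i ∉ ris σ := fun hmem => by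
    have := (cs.isRightInversion_of_mem_rightInvSeq hσ hmem).2
    rw [← hσw, simple_mul_simple_cancel_right] at this
    omega
  have h₀ : cs.rightInvParity (w * s i) (s i) = 0 := by
    rw [hσw, rightInvParity_wordProd, List.count_eq_zero.mpr hnotMem, Nat.cast_zero]
  have h₁ := cs.rightInvParity_mul_simple (w * s i) i (s i)
  rw [simple_mul_simple_cancel_right, simple_mul_simple_self, one_mul, if_pos rfl, h₀, h] at h₁
  exact one_ne_zero h₁.symm

lemma rightInvParity_wordProd_eq_zero {b : B} {σ : List B} (hb : b ∉ σ) {t : W}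
    (ht : t ∉ cs.coordStabilizer b) : cs.rightInvParity (π σ) t = 0 := by
  rw [rightInvParity_wordProd, List.count_eq_zero.mpr
    fun hmem => ht (cs.rightInvSeq_subset_coordStabilizer hb t hmem), Nat.cast_zero]

end Parity

lemma length_wordProd_mul_simple_mul_simple {b c : B} {σ : List B} (hb : b ∉ σ)
    (hbc : ¬Commute (s b) (s c)) : ℓ (π σ * s b * s c) = ℓ (π σ) + 2 := by
  have hcb : s c ≠ s b := fun h => hbc (h ▸ Commute.refl _)
  have h₁ := cs.length_mul_simple_of_rightInvParity_eq_zero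
    (cs.rightInvParity_wordProd_eq_zero hb (cs.simple_notMem_coordStabilizer b))
  have h₂ : cs.rightInvParity (π σ * s b) (s c) = 0 := by
    rw [rightInvParity_mul_simple, if_neg hcb, zero_add,
      cs.rightInvParity_wordProd_eq_zero hb (cs.mul_simple_mul_notMem_coordStabilizer hbc)]
  rw [cs.length_mul_simple_of_rightInvParity_eq_zero h₂, h₁]

lemma length_wordProd_path_step {ν : List B} {b c : B} (hb : b ∉ ν)
    (hν : ∀ a ∈ ν, Commute (s a) (s b)) (hbc : ¬Commute (s b) (s c)) :
    ℓ (π ((ν ++ [c] ++ [b]) ++ (ν ++ [c]))) = ℓ (π (ν ++ [c] ++ ν)) + 2 := by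
  have hcomm : Commute (s b) (π ν) :=
    Commute.list_prod_right _ _ fun w hw => by
      obtain ⟨a, ha, rfl⟩ := List.mem_map.mp hw
      exact (hν a ha).symm
  have hbc' : b ≠ c := by rintro rfl; exact hbc (Commute.refl _)
  rw [← cs.length_wordProd_mul_simple_mul_simple (by simp [hb, hbc']) hbc]
  simp only [wordProd_append, wordProd_singleton, mul_assoc, ← mul_assoc (s b), hcomm.eq]

lemma length_wordProd_take_succ_append_take {ω : List B} (hnodup : ω.Nodup)
    (hchain : List.IsChain (fun a b => ¬ Commute (s a) (s b)) ω)
    (hfar : ∀ j l : Fin ω.length, j.1 + 2 ≤ l.1 → Commute (s (ω.get j)) (s (ω.get l)))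
    (n : ℕ) (hn : n < ω.length) : ℓ (π (ω.take (n + 1) ++ ω.take n)) = 2 * n + 1 := by
  induction n with
  | zero => simp [List.take_add_one, List.getElem?_eq_getElem hn, length_simple]
  | succ n ih =>
    have hb : ω[n + 1] ∉ ω.take n := fun hmem => by
      obtain ⟨j, hj, hget⟩ := List.mem_take_iff_getElem.mp hmem
      have := (hnodup.getElem_inj_iff).mp hget
      omega
    have hν : ∀ a ∈ ω.take n, Commute (s a) (s ω[n + 1]) := fun a ha => by
      obtain ⟨j, hj, rfl⟩ := List.mem_take_iff_getElem.mp ha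
      exact hfar ⟨j, by omega⟩ ⟨n + 1, hn⟩ (by simp only; omega)
    have hbc : ¬Commute (s ω[n + 1]) (s ω[n]) := fun h =>
      List.isChain_iff_getElem.mp hchain n hn h.symm
    rw [List.take_succ_eq_append_getElem hn, List.take_succ_eq_append_getElem (by omega),
      cs.length_wordProd_path_step hb hν hbc, ← List.take_succ_eq_append_getElem, ih (by omega)]
    ring

end CoxeterSystem

theorem path_word_concat_dropLast_reduced_general
    {B : Type*} {W : Type*} [Group W] {M : CoxeterMatrix B} (cs : CoxeterSystem M W)
    (ω : List B) (hnodup : ω.Nodup)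
    (hchain : List.Chain' (fun a b => ¬ Commute (cs.simple a) (cs.simple b)) ω)
    (hfar : ∀ j l : Fin ω.length, j.1 + 2 ≤ l.1 →
      Commute (cs.simple (ω.get j)) (cs.simple (ω.get l))) :
    cs.length (cs.wordProd (ω ++ ω.dropLast)) = 2 * ω.length - 1 := by
  rcases Nat.eq_zero_or_pos ω.length with h | h
  · simp [List.length_eq_zero_iff.mp h]
  · have := cs.length_wordProd_take_succ_append_take hnodup hchain hfar (ω.length - 1) (by omega)
    rwa [Nat.sub_add_cancel h, List.take_length, ← List.dropLast_eq_take,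
      show 2 * (ω.length - 1) + 1 = 2 * ω.length - 1 by omega] at this

/-- Let `(W, S)` be a Coxeter system with generators indexed by `B`. Let
`ω = (i₁, …, i_k)` (with `k ≥ 2`) be a list of pairwise distinct indices such that
consecutive generators do not commute while generators at distance at least `2` commute
(so `i₁, …, i_k` are the vertices, in order, of a path in the Coxeter diagram). Then the
concatenation of `(i₁, …, i_k)` and `(i₁, …, i_{k-1})` is a reduced word; that is,
`ℓ((s_{i₁} ⋯ s_{i_k}) · (s_{i₁} ⋯ s_{i_{k-1}})) = 2k - 1`. -/
theorem path_word_concat_dropLast_reduced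
    {B : Type*} {W : Type*} [Group W] {M : CoxeterMatrix B} (cs : CoxeterSystem M W)
    (ω : List B) (hk : 2 ≤ ω.length) (hnodup : ω.Nodup)
    (hchain : List.Chain' (fun a b => ¬ Commute (cs.simple a) (cs.simple b)) ω)
    (hfar : ∀ j l : Fin ω.length, j.1 + 2 ≤ l.1 →
      Commute (cs.simple (ω.get j)) (cs.simple (ω.get l))) :
    cs.length (cs.wordProd (ω ++ ω.dropLast)) = 2 * ω.length - 1 :=
  path_word_concat_dropLast_reduced_general cs ω hnodup hchain hfar
end

section
/- Let (W,S) be a Coxeter system with generators s_i indexed by a set B. Let i_1,…,i_k ∈ B (k ≥ 2) be pairwise distinct indices such that s_{i_j} and s_{i_{j+1}} do not commute for each 1 ≤ j < k, while s_{i_j} and s_{i_l} commute whenever |j − l| ≥ 2 (so i_1,…,i_k are the vertices, in order, of a path in the Coxeter diagram). Then the word (i_k, i_1, i_2, …, i_k) is reduced; that is, ℓ( s_{i_k}·(s_{i_1}⋯s_{i_k}) ) = k + 1. -/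
/-!
Write `ω = (i₁, …, i_k)`. Its letters are pairwise distinct, so `ω` is reduced, and it remains to
see that `s_{i_k}` is not a left descent of `π ω`. By the exchange condition it would otherwise
occur in the left inversion sequence `s_{i₁}, s_{i₁} s_{i₂} s_{i₁}, …` of `ω`. All entries but the
last lie in the parabolic subgroup generated by `s_{i₁}, …, s_{i_{k-1}}`, which does not contain
`s_{i_k}`: in the geometric representation it preserves the `e_{i_k}`-coordinate, while `s_{i_k}`
negates `e_{i_k}`. The last entry is `s_{i_k}` only if `s_{i₁} ⋯ s_{i_{k-1}}` commutes with
`s_{i_k}`; since `s_{i₁}, …, s_{i_{k-2}}` do, `s_{i_{k-1}}` would commute with `s_{i_k}`.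

The exchange condition is obtained from Tits' permutation representation of `W` on `W × ZMod 2`:
its existence makes the parity of the number of occurrences of a reflection in the inversion
sequence of a word depend only on the element the word represents.
-/

open Real Finsupp

namespace CoxeterMatrix

variable {B : Type*} (M : CoxeterMatrix B)

/-- The linear form `⟪e_a, ·⟫` of the cosine form `⟪e_a, e_b⟫ = -cos (π / M a b)`. For `M a b = 0`
Lean's `π / 0 = 0` gives the intended value `-1`. -/
noncomputable def cosForm (a : B) : (B →₀ ℝ) →ₗ[ℝ] ℝ :=
  linearCombination ℝ fun b => -cos (π / M a b)

noncomputable def geometricReflection (a : B) : Module.End ℝ (B →₀ ℝ) :=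
  LinearMap.id - (2 : ℝ) • (M.cosForm a).smulRight (single a 1)

local notation "σ" => M.geometricReflection

lemma cosForm_single (a b : B) : M.cosForm a (single b 1) = -cos (π / M a b) := by
  simp [cosForm]

lemma cosForm_single_self (a : B) : M.cosForm a (single a 1) = 1 := by
  simp [cosForm_single]

lemma geometricReflection_apply (a : B) (v : B →₀ ℝ) :
    σ a v = v - (2 * M.cosForm a v) • single a 1 := by
  simp [geometricReflection]

lemma geometricReflection_apply_of_cosForm_eq_zero {a : B} {v : B →₀ ℝ}
    (h : M.cosForm a v = 0) : σ a v = v := by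
  simp [geometricReflection_apply, h]

lemma geometricReflection_mul_self (a : B) : σ a * σ a = 1 := by
  refine LinearMap.ext fun v => ?_
  simp only [Module.End.mul_apply, Module.End.one_apply, geometricReflection_apply, map_sub,
    map_smul, cosForm_single_self]
  module

lemma geometricReflection_apply_plane {a b : B} {c : ℝ} (hc : cos (π / M a b) = c) (x y : ℝ) :
    σ a (x • single a 1 + y • single b 1) = (2 * c * y - x) • single a 1 + y • single b 1 := by
  simp only [geometricReflection_apply, map_add, map_smul, cosForm_single_self, cosForm_single, hc]
  module

/-- Up to the factor `sin (π / M i j)`, the unit vector at angle `φ` in the plane of `e_i` and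
`e_j`, where `e_i` has angle `0` and `e_j` angle `π - π / M i j`. -/
noncomputable def planeVec (i j : B) (φ : ℝ) : B →₀ ℝ :=
  sin (φ + π / M i j) • single i 1 + sin φ • single j 1

lemma geometricReflection_mul_apply_planeVec (i j : B) (φ : ℝ) :
    (σ i * σ j) (M.planeVec i j φ) = M.planeVec i j (φ + 2 * (π / M i j)) := by
  have hrot (θ ψ : ℝ) : 2 * cos θ * sin (ψ + θ) - sin ψ = sin (ψ + θ + θ) := by
    simp only [sin_add, cos_add]
    linear_combination sin ψ * sin_sq_add_cos_sq θ
  have hji : cos (π / M j i) = cos (π / M i j) := by rw [M.symmetric]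
  rw [Module.End.mul_apply, planeVec, add_comm, geometricReflection_apply_plane M hji, add_comm,
    geometricReflection_apply_plane M rfl, hrot, hrot, planeVec]
  congr 3 <;> ring

lemma pow_apply_planeVec (i j : B) (φ : ℝ) (r : ℕ) :
    ((σ i * σ j) ^ r) (M.planeVec i j φ) = M.planeVec i j (φ + r * (2 * (π / M i j))) := by
  induction r generalizing φ with
  | zero => simp
  | succ r ih =>
    rw [pow_succ, Module.End.mul_apply, geometricReflection_mul_apply_planeVec, ih]
    push_cast
    ring_nf

lemma planeVec_zero (i j : B) : M.planeVec i j 0 = sin (π / M i j) • single i 1 := by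
  simp [planeVec]

lemma planeVec_neg (i j : B) :
    M.planeVec i j (-(π / M i j)) = (-sin (π / M i j)) • single j 1 := by
  simp [planeVec]

lemma geometricReflection_mul_pow_apply_planeVec {i j : B} (hij : M i j ≠ 0) (φ : ℝ) :
    ((σ i * σ j) ^ M i j) (M.planeVec i j φ) = M.planeVec i j φ := by
  have hturn : (M i j : ℝ) * (2 * (π / M i j)) = 2 * π := by field_simp
  rw [pow_apply_planeVec, hturn, planeVec, planeVec, add_right_comm, sin_add_two_pi,
    sin_add_two_pi]

/-- For `cos (π / M i j) ^ 2 ≠ 1` the cosine form is nondegenerate on the plane of `e_i, e_j`, so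
every vector is a sum of a vector in that plane and one orthogonal to both `e_i` and `e_j`. -/
lemma eq_one_of_fixes_plane_and_orthogonal {i j : B} (hc : cos (π / M i j) ^ 2 ≠ 1)
    {f : Module.End ℝ (B →₀ ℝ)} (hi : f (single i 1) = single i 1)
    (hj : f (single j 1) = single j 1)
    (horth : ∀ u, M.cosForm i u = 0 → M.cosForm j u = 0 → f u = u) : f = 1 := by
  refine LinearMap.ext fun v => ?_
  set c := cos (π / M i j)
  have hc' : 1 - c ^ 2 ≠ 0 := sub_ne_zero.2 (Ne.symm hc)
  have hij : M.cosForm i (single j 1) = -c := M.cosForm_single i j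
  have hji : M.cosForm j (single i 1) = -c := by rw [cosForm_single, M.symmetric]
  set α := (M.cosForm i v + c * M.cosForm j v) / (1 - c ^ 2)
  set β := (M.cosForm j v + c * M.cosForm i v) / (1 - c ^ 2)
  set u := v - α • single i 1 - β • single j 1 with hu
  have hui : M.cosForm i u = 0 := by
    simp only [hu, map_sub, map_smul, cosForm_single_self, hij, smul_eq_mul, α, β]
    field_simp
    ring
  have huj : M.cosForm j u = 0 := by
    simp only [hu, map_sub, map_smul, cosForm_single_self, hji, smul_eq_mul, α, β]
    field_simp
    ring
  have hv : v = α • single i 1 + β • single j 1 + u := by rw [hu]; abel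
  rw [Module.End.one_apply, hv, map_add, map_add, map_smul, map_smul, hi, hj, horth u hui huj]

theorem isLiftable_geometricReflection : M.IsLiftable M.geometricReflection := by
  intro i j
  rcases eq_or_ne i j with rfl | hij
  · rw [M.diagonal, pow_one, geometricReflection_mul_self]
  rcases eq_or_ne (M i j) 0 with h0 | h0
  · rw [h0, pow_zero]
  have hm : (2 : ℝ) ≤ M i j := by
    have := M.off_diagonal i j hij
    exact_mod_cast (by omega : 2 ≤ M i j)
  have hsin : sin (π / M i j) ≠ 0 :=
    (sin_pos_of_pos_of_lt_pi (by positivity) (div_lt_self pi_pos (by linarith))).ne'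
  have hfix := M.geometricReflection_mul_pow_apply_planeVec h0
  refine M.eq_one_of_fixes_plane_and_orthogonal (by rw [cos_sq']; simpa using hsin) ?_ ?_
    fun u hui huj => ?_
  · have := hfix 0
    rw [planeVec_zero, map_smul] at this
    exact smul_right_injective _ hsin this
  · have := hfix (-(π / M i j))
    rw [planeVec_neg, map_smul] at this
    exact smul_right_injective _ (neg_ne_zero.2 hsin) this
  · rw [Module.End.pow_apply]
    refine Function.iterate_fixed ?_ _
    rw [Module.End.mul_apply, M.geometricReflection_apply_of_cosForm_eq_zero huj,
      M.geometricReflection_apply_of_cosForm_eq_zero hui]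

end CoxeterMatrix

open List

namespace CoxeterSystem

variable {B W : Type*} [Group W] {M : CoxeterMatrix B} (cs : CoxeterSystem M W)

lemma lift_wordProd {G : Type*} [Monoid G] {f : B → G} (hf : M.IsLiftable f) (ω : List B) :
    cs.lift ⟨f, hf⟩ (cs.wordProd ω) = (ω.map f).prod := by
  rw [wordProd, map_list_prod, map_map]
  exact congrArg List.prod (map_congr_left fun i _ => cs.lift_apply_simple hf i)

noncomputable def geometricRepresentation : W →* Module.End ℝ (B →₀ ℝ) :=
  cs.lift ⟨M.geometricReflection, M.isLiftable_geometricReflection⟩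

def coordinateStabilizer (x : B) : Subgroup W where
  carrier := {w | ∀ v, cs.geometricRepresentation w v x = v x}
  one_mem' := by simp
  mul_mem' {u w} hu hw v := by rw [map_mul, Module.End.mul_apply, hu, hw]
  inv_mem' {w} hw v := by
    rw [← hw (cs.geometricRepresentation w⁻¹ v), ← Module.End.mul_apply, ← map_mul,
      mul_inv_cancel, map_one, Module.End.one_apply]

theorem simple_notMem_closure_simple_image {X : Set B} {x : B} (hx : x ∉ X) :
    cs.simple x ∉ Subgroup.closure (cs.simple '' X) := by
  have hle : Subgroup.closure (cs.simple '' X) ≤ cs.coordinateStabilizer x := by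
    rw [Subgroup.closure_le]
    rintro _ ⟨b, hb, rfl⟩ v
    simp [geometricRepresentation, lift_apply_simple, M.geometricReflection_apply,
      ne_of_mem_of_not_mem hb hx]
  intro hmem
  have := hle hmem (single x 1)
  simp [geometricRepresentation, lift_apply_simple, M.geometricReflection_apply,
    M.cosForm_single_self] at this

lemma mem_closure_of_mem_leftInvSeq {ω : List B} {t : W} (ht : t ∈ cs.leftInvSeq ω) :
    t ∈ Subgroup.closure (cs.simple '' {a | a ∈ ω}) := by
  induction ω generalizing t with
  | nil => simp at ht
  | cons i ω ih =>
    have hi : cs.simple i ∈ Subgroup.closure (cs.simple '' {a | a ∈ i :: ω}) :=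
      Subgroup.subset_closure ⟨i, mem_cons_self, rfl⟩
    have hmono : Subgroup.closure (cs.simple '' {a | a ∈ ω}) ≤
        Subgroup.closure (cs.simple '' {a | a ∈ i :: ω}) :=
      Subgroup.closure_mono (Set.image_mono fun a ha => mem_cons_of_mem i ha)
    rcases ht with _ | ⟨_, ht⟩
    · exact hi
    · obtain ⟨t', ht', rfl⟩ := mem_map.1 ht
      exact Subgroup.mul_mem _ (Subgroup.mul_mem _ hi (hmono (ih ht'))) (Subgroup.inv_mem _ hi)

theorem simple_notMem_leftInvSeq {ω : List B} {x : B} (hx : x ∉ ω) :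
    cs.simple x ∉ cs.leftInvSeq ω := fun hmem =>
  cs.simple_notMem_closure_simple_image (X := {a | a ∈ ω}) hx
    (cs.mem_closure_of_mem_leftInvSeq hmem)

lemma prod_map_alternatingWord_two_mul {G : Type*} [Monoid G] (f : B → G) (i j : B) (q : ℕ) :
    ((alternatingWord i j (2 * q)).map f).prod = (f i * f j) ^ q := by
  induction q with
  | zero => simp [alternatingWord]
  | succ q ih =>
    rw [mul_add_one, alternatingWord_succ', alternatingWord_succ', if_neg (by simp),
      if_pos (by simp), map_cons, map_cons, prod_cons, prod_cons, ih, pow_succ', mul_assoc]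

/-- The `k`-th entry is `s_i (s_j s_i) ^ k`, which has period `M i j` in `k`. -/
lemma exists_leftInvSeq_alternatingWord_eq_append_self (i j : B) :
    ∃ L, cs.leftInvSeq (alternatingWord i j (2 * M i j)) = L ++ L := by
  have hperiod (k : ℕ) : cs.wordProd (alternatingWord j i (2 * (M i j + k) + 1)) =
      cs.wordProd (alternatingWord j i (2 * k + 1)) := by
    simp only [prod_alternatingWord_eq_mul_pow, Nat.not_even_bit1, if_false]
    rw [show (2 * (M i j + k) + 1) / 2 = M j i + k by rw [M.symmetric]; omega,
      show (2 * k + 1) / 2 = k by omega, pow_add, simple_mul_simple_pow, one_mul]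
  refine ⟨(range (M i j)).map fun k => cs.wordProd (alternatingWord j i (2 * k + 1)), ?_⟩
  refine ext_getElem (by simp [two_mul]) fun k hk _ => ?_
  simp only [length_leftInvSeq, length_alternatingWord] at hk
  rw [getElem_leftInvSeq_alternatingWord cs i j _ k hk, getElem_append]
  split_ifs with h
  · simp
  · simp only [length_map, length_range, not_lt] at h
    simp only [getElem_map, getElem_range, length_map, length_range]
    rw [← hperiod (k - M i j), Nat.add_sub_cancel' h]

lemma simple_conj_eq_simple_iff (i : B) (t : W) :
    cs.simple i * t * cs.simple i = cs.simple i ↔ t = cs.simple i := by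
  constructor <;> intro h
  · simpa [mul_assoc] using congrArg (cs.simple i * · * cs.simple i) h
  · simp [h]

section ConjFlip

variable [DecidableEq W]

/-- Tits' permutation attached to `s_i`. -/
def conjFlip (i : B) : Equiv.Perm (W × ZMod 2) :=
  Function.Involutive.toPerm
    (fun p => (cs.simple i * p.1 * cs.simple i, p.2 + if p.1 = cs.simple i then 1 else 0))
    fun ⟨t, ε⟩ => by
      simp only [cs.simple_conj_eq_simple_iff, add_assoc, CharTwo.add_self_eq_zero, add_zero]
      simp [mul_assoc]

lemma conjFlip_apply (i : B) (t : W) (ε : ZMod 2) :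
    cs.conjFlip i (t, ε) = (cs.simple i * t * cs.simple i, ε + if t = cs.simple i then 1 else 0) :=
  rfl

lemma prod_map_conjFlip_apply (ω : List B) (t : W) (ε : ZMod 2) :
    (ω.map cs.conjFlip).prod (t, ε) =
      (cs.wordProd ω * t * (cs.wordProd ω)⁻¹,
        ε + (cs.leftInvSeq ω).count (cs.wordProd ω * t * (cs.wordProd ω)⁻¹)) := by
  induction ω with
  | nil => simp
  | cons i ω ih =>
    set t' := cs.wordProd ω * t * (cs.wordProd ω)⁻¹
    have hconj : cs.wordProd (i :: ω) * t * (cs.wordProd (i :: ω))⁻¹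
        = cs.simple i * t' * cs.simple i := by
      simp [t', wordProd_cons, mul_assoc]
    have hcount : (cs.leftInvSeq (i :: ω)).count (cs.simple i * t' * cs.simple i)
        = (cs.leftInvSeq ω).count t' + if t' = cs.simple i then 1 else 0 := by
      have hmap : cs.simple i * t' * cs.simple i = MulAut.conj (cs.simple i) t' := by simp
      rw [leftInvSeq, count_cons, hmap, count_map_of_injective _ _ (MulAut.conj _).injective,
        ← hmap]
      simp only [beq_iff_eq, eq_comm (a := cs.simple i), cs.simple_conj_eq_simple_iff]
    rw [map_cons, prod_cons, Equiv.Perm.mul_apply, ih, hconj, hcount, conjFlip_apply]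
    push_cast
    rw [add_assoc]

lemma isLiftable_conjFlip : M.IsLiftable cs.conjFlip := by
  intro i j
  obtain ⟨L, hL⟩ := cs.exists_leftInvSeq_alternatingWord_eq_append_self i j
  have hprod : cs.wordProd (alternatingWord i j (2 * M i j)) = 1 := by
    rw [prod_alternatingWord_eq_mul_pow, if_pos (even_two_mul _),
      Nat.mul_div_cancel_left _ two_pos, simple_mul_simple_pow, one_mul]
  refine Equiv.ext fun ⟨t, ε⟩ => ?_
  rw [← prod_map_alternatingWord_two_mul, prod_map_conjFlip_apply, hprod, hL, count_append]
  simp [CharTwo.add_self_eq_zero]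

theorem count_leftInvSeq_eq_of_wordProd_eq {ω ω' : List B}
    (h : cs.wordProd ω = cs.wordProd ω') (t : W) :
    ((cs.leftInvSeq ω).count t : ZMod 2) = (cs.leftInvSeq ω').count t := by
  have key (ω : List B) : ((cs.lift ⟨cs.conjFlip, cs.isLiftable_conjFlip⟩ (cs.wordProd ω))
      ((cs.wordProd ω)⁻¹ * t * cs.wordProd ω, 0)).2 = (cs.leftInvSeq ω).count t := by
    rw [lift_wordProd, prod_map_conjFlip_apply]
    simp [mul_assoc]
  rw [← key, ← key, h]

end ConjFlip

theorem simple_mem_leftInvSeq_of_isLeftDescent {ω : List B} {i : B}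
    (h : cs.IsLeftDescent (cs.wordProd ω) i) : cs.simple i ∈ cs.leftInvSeq ω := by
  classical
  obtain ⟨ρ, hρ, hρω⟩ := cs.exists_isReduced (cs.simple i * cs.wordProd ω)
  have hnotMem : cs.simple i ∉ cs.leftInvSeq ρ := fun hmem => by
    have hlt := (cs.isLeftInversion_of_mem_leftInvSeq hρ hmem).2
    rw [← hρω, simple_mul_simple_cancel_left] at hlt
    exact lt_asymm h hlt
  have hcount_one : (cs.leftInvSeq (i :: ρ)).count (cs.simple i) = 1 := by
    have hconj := count_map_of_injective (cs.leftInvSeq ρ) _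
      (MulAut.conj (cs.simple i)).injective (cs.simple i)
    simp only [MulAut.conj_apply, inv_simple, simple_mul_simple_cancel_right] at hconj
    rw [leftInvSeq, count_cons, hconj, count_eq_zero.2 hnotMem]
    simp
  have hword : cs.wordProd (i :: ρ) = cs.wordProd ω := by
    rw [wordProd_cons, ← hρω, simple_mul_simple_cancel_left]
  have hcount := cs.count_leftInvSeq_eq_of_wordProd_eq hword (cs.simple i)
  by_contra hnotMem'
  rw [hcount_one, count_eq_zero.2 hnotMem'] at hcount
  exact one_ne_zero (by exact_mod_cast hcount)

theorem length_wordProd_cons_of_simple_notMem_leftInvSeq {ω : List B} {i : B}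
    (h : cs.simple i ∉ cs.leftInvSeq ω) :
    cs.length (cs.wordProd (i :: ω)) = cs.length (cs.wordProd ω) + 1 := by
  rw [wordProd_cons]
  refine (cs.length_simple_mul _ i).resolve_right fun hlt =>
    h (cs.simple_mem_leftInvSeq_of_isLeftDescent ?_)
  unfold IsLeftDescent
  omega

theorem isReduced_of_nodup {ω : List B} (hω : ω.Nodup) : cs.IsReduced ω := by
  induction ω with
  | nil => simp [IsReduced]
  | cons i ω ih =>
    rw [nodup_cons] at hω
    rw [IsReduced, cs.length_wordProd_cons_of_simple_notMem_leftInvSeq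
      (cs.simple_notMem_leftInvSeq hω.1), ih hω.2, length_cons]

theorem simple_notMem_leftInvSeq_append_pair {ω : List B} {x y : B} (hx : x ∉ ω ++ [y])
    (hfar : ∀ a ∈ ω, Commute (cs.simple a) (cs.simple x))
    (hyx : ¬Commute (cs.simple y) (cs.simple x)) :
    cs.simple x ∉ cs.leftInvSeq (ω ++ [y, x]) := by
  rw [show ω ++ [y, x] = (ω ++ [y]).concat x by simp, leftInvSeq_concat, concat_eq_append,
    mem_append, mem_singleton, not_or]
  refine ⟨cs.simple_notMem_leftInvSeq hx, fun hconj => hyx ?_⟩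
  have hωx : Commute (cs.wordProd ω) (cs.simple x) :=
    Commute.list_prod_left _ _ (by simpa using hfar)
  have hωyx : Commute (cs.wordProd ω * cs.simple y) (cs.simple x) := by
    rw [← wordProd_singleton, ← wordProd_append]
    exact mul_inv_eq_iff_eq_mul.mp hconj.symm
  simpa using hωx.inv_left.mul_left hωyx

end CoxeterSystem

/-- Let `(W, S)` be a Coxeter system with generators indexed by `B`. Let
`ω = (i₁, …, i_k)` (with `k ≥ 2`) be a list of pairwise distinct indices such that
consecutive generators do not commute while generators at distance at least `2` commute
(so `i₁, …, i_k` are the vertices, in order, of a path in the Coxeter diagram). Then the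
word `(i_k, i₁, i₂, …, i_k)` is reduced; that is, `ℓ(s_{i_k} · (s_{i₁} ⋯ s_{i_k})) = k + 1`. -/
theorem path_word_prepend_last_reduced
    {B : Type*} {W : Type*} [Group W] {M : CoxeterMatrix B} (cs : CoxeterSystem M W)
    (ω : List B) (hne : ω ≠ []) (hk : 2 ≤ ω.length) (hnodup : ω.Nodup)
    (hchain : List.Chain' (fun a b => ¬ Commute (cs.simple a) (cs.simple b)) ω)
    (hfar : ∀ j l : Fin ω.length, j.1 + 2 ≤ l.1 →
      Commute (cs.simple (ω.get j)) (cs.simple (ω.get l))) :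
    cs.length (cs.wordProd (ω.getLast hne :: ω)) = ω.length + 1 := by
  obtain ⟨ω₀, y, x, rfl⟩ : ∃ ω₀ y x, ω = ω₀ ++ [y, x] := by
    obtain ⟨ω₁, x, rfl⟩ := (eq_nil_or_concat' ω).resolve_left hne
    obtain ⟨ω₀, y, rfl⟩ := (eq_nil_or_concat' ω₁).resolve_left (by rintro rfl; simp at hk)
    exact ⟨ω₀, y, x, by simp⟩
  have hlast : (ω₀ ++ [y, x]).getLast hne = x := by simp
  have hx : x ∉ ω₀ ++ [y] := by
    rw [← singleton_append, ← append_assoc, nodup_append_comm, singleton_append] at hnodup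
    exact (nodup_cons.1 hnodup).1
  have hyx : ¬Commute (cs.simple y) (cs.simple x) := (isChain_append_cons_cons.1 hchain).2.1
  have hcomm : ∀ a ∈ ω₀, Commute (cs.simple a) (cs.simple x) := by
    intro a ha
    obtain ⟨j, hj, rfl⟩ := getElem_of_mem ha
    simpa [getElem_append_left hj] using
      hfar ⟨j, by simp; omega⟩ ⟨ω₀.length + 1, by simp⟩ (by simp; omega)
  rw [hlast, cs.length_wordProd_cons_of_simple_notMem_leftInvSeq
    (cs.simple_notMem_leftInvSeq_append_pair hx hcomm hyx), cs.isReduced_of_nodup hnodup]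
end

section
/- Let R be a commutative ring, let ι be a finite linearly ordered index type, and for each i ∈ ι let κ_i be a finite type. Let A be a square matrix over R whose rows and columns are indexed by the disjoint union Σ_{i∈ι} κ_i, and suppose A is block upper triangular: A_{(i,a),(j,b)} = 0 whenever j < i. Suppose moreover that for each i ∈ ι the diagonal block (a,b) ↦ A_{(i,a),(i,b)} has linearly independent rows over R. Then all the rows of A are linearly independent over R. -/
/-- Let `R` be a commutative ring, `ι` a finite linearly ordered index type,
and `κ i` a finite type for each `i : ι`. Let `A` be a square matrix over `R` indexed by
the disjoint union `Σ i, κ i` which is block upper triangular: `A (i,a) (j,b) = 0`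
whenever `j < i`. If for each `i` the diagonal block `(a, b) ↦ A (i,a) (i,b)` has linearly
independent rows over `R`, then all the rows of `A` are linearly independent over `R`. -/
theorem rows_of_block_upper_triangular_linearIndependent
    (R : Type*) [CommRing R] (ι : Type*) [Fintype ι] [LinearOrder ι]
    (κ : ι → Type*) [∀ i, Fintype (κ i)]
    (A : Matrix (Σ i : ι, κ i) (Σ i : ι, κ i) R)
    (hblock : ∀ (i j : ι) (a : κ i) (b : κ j), j < i → A ⟨i, a⟩ ⟨j, b⟩ = 0)
    (hdiag : ∀ i : ι, LinearIndependent R (fun a : κ i => fun b : κ i => A ⟨i, a⟩ ⟨i, b⟩)) :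
    LinearIndependent R (fun p : Σ i : ι, κ i => A p) := by
  rw [Fintype.linearIndependent_iff]
  intro g hg
  suffices H : ∀ i : ι, ∀ a : κ i, g ⟨i, a⟩ = 0 by
    rintro ⟨i, a⟩; exact H i a
  intro i
  induction i using WellFoundedLT.induction with
  | _ i IH =>
  have key : ∀ b : κ i, ∑ a : κ i, g ⟨i, a⟩ * A ⟨i, a⟩ ⟨i, b⟩ = 0 := by
    intro b
    have h := congrFun hg ⟨i, b⟩
    simp only [Finset.sum_apply, Pi.smul_apply, smul_eq_mul, Pi.zero_apply] at h
    rw [← Finset.univ_sigma_univ, Finset.sum_sigma] at h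
    rw [← h]
    symm
    apply Finset.sum_eq_single i
    · intro j _ hj
      rcases lt_or_gt_of_ne hj with hlt | hgt
      · apply Finset.sum_eq_zero
        intro a _
        rw [IH j hlt a, zero_mul]
      · apply Finset.sum_eq_zero
        intro a _
        rw [hblock _ _ _ _ hgt, mul_zero]
    · intro hmem; exact absurd (Finset.mem_univ i) hmem
  have := Fintype.linearIndependent_iff.mp (hdiag i) (fun a => g ⟨i, a⟩)
  apply this
  funext b
  simpa using key b
end

section
/- For every u, v ∈ W and every choice of reduced word for u, the Billey polynomial σ_v(u) ∈ R is nonzero if and only if v ≤ u in Bruhat order, i.e. if and only if some reduced word for u contains a subsequence that is a reduced word for v. -/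
noncomputable section

open MvPolynomial
open scoped Classical

/-- The polynomial ring `R = ℂ[x₁, …, xₙ]`. -/
abbrev BilleyR (n : ℕ) := MvPolynomial (Fin n) ℂ

/-- The simple transposition `sᵢ = (i, i+1)` in the symmetric group on `{1, …, n}`. -/
def sTr (n : ℕ) (i : Fin (n - 1)) : Equiv.Perm (Fin n) :=
  Equiv.swap ⟨i.1, by have := i.isLt; omega⟩ ⟨i.1 + 1, by have := i.isLt; omega⟩

/-- The length `ℓ(w)`: the minimal `k` such that `w` is a product of `k` simple
transpositions. -/
def len (n : ℕ) (w : Equiv.Perm (Fin n)) : ℕ :=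
  sInf {k | ∃ l : List (Fin (n - 1)), l.length = k ∧ (l.map (sTr n)).prod = w}

/-- `l` is a reduced word for `w`: the product of the corresponding simple transpositions
is `w` and the length of `l` is `ℓ(w)`. -/
def IsRedWord (n : ℕ) (l : List (Fin (n - 1))) (w : Equiv.Perm (Fin n)) : Prop :=
  (l.map (sTr n)).prod = w ∧ l.length = len n w

/-- The simple root `αᵢ = xᵢ - x_{i+1}`. -/
def alphaR (n : ℕ) (i : Fin (n - 1)) : BilleyR n :=
  X ⟨i.1, by have := i.isLt; omega⟩ - X ⟨i.1 + 1, by have := i.isLt; omega⟩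

/-- Given a word `b = (b₁, …, b_m)`, the polynomial
`r(j, u) = (s_{b₁} ⋯ s_{b_{j-1}})(α_{b_j})` (with `j` zero-indexed here). -/
def rPoly (n : ℕ) (b : List (Fin (n - 1))) (j : Fin b.length) : BilleyR n :=
  rename (⇑(((b.take j.1).map (sTr n)).prod)) (alphaR n (b.get j))

/-- Billey's formula with respect to the word `b` for `u`:
`σ_v(u) = Σ ∏ₜ r(jₜ, u)`, summed over all strictly increasing index sequences
`j₁ < ⋯ < j_{ℓ(v)}` into `b` such that `s_{b_{j₁}} ⋯ s_{b_{j_{ℓ(v)}}} = v`. -/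
def billeyWord (n : ℕ) (b : List (Fin (n - 1))) (v : Equiv.Perm (Fin n)) : BilleyR n :=
  ∑ J ∈ Finset.univ.filter (fun J : Finset (Fin b.length) =>
      J.card = len n v ∧
        ((J.sort (· ≤ ·)).map (fun j => sTr n (b.get j))).prod = v),
    ∏ j ∈ J, rPoly n b j

/-- The Billey polynomial `σ_v(u)`, computed from a choice of reduced word for `u`
(its value is independent of this choice). -/
def sigma (n : ℕ) (v u : Equiv.Perm (Fin n)) : BilleyR n :=
  if h : ∃ b : List (Fin (n - 1)), IsRedWord n b u then billeyWord n h.choose v else 0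

/-- The standard parabolic subgroup `W_P` generated by `{sᵢ : i ∈ P}`. -/
def WPar (n : ℕ) (P : Set (Fin (n - 1))) : Subgroup (Equiv.Perm (Fin n)) :=
  Subgroup.closure (sTr n '' P)

/-- The set `W^P` of minimal-length coset representatives of `W / W_P`. -/
def minReps (n : ℕ) (P : Set (Fin (n - 1))) : Set (Equiv.Perm (Fin n)) :=
  {v | ∀ u ∈ WPar n P, len n v ≤ len n (v * u)}

/-- Bruhat order on `W`: `v ≤ u` iff some reduced word for `u` contains a subsequence
that is a reduced word for `v`. -/
def bruhatLE (n : ℕ) (v u : Equiv.Perm (Fin n)) : Prop :=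
  ∃ b : List (Fin (n - 1)), IsRedWord n b u ∧
    ∃ c : List (Fin (n - 1)), c.Sublist b ∧ IsRedWord n c v

/-!
At the point `xₖ = -k` the factor `r(j, u)` evaluates to `w(b_j + 1) - w(b_j)` with
`w = s_{b₁} ⋯ s_{b_{j-1}}`, which is positive because `w s_{b_j}` is longer than `w`. Hence no
cancellation can occur, and `σ_v(u) ≠ 0` exactly when the fixed reduced word of `u` has a reduced
subword for `v`. That this does not depend on the reduced word (the subword property) is proved by
comparing both with the classical Bruhat order, generated by swapping an inverted pair of values:
the strong exchange property lets such a swap be realised by deleting a letter of any reduced word,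
and conversely a subword is reached from `u` by such swaps, by induction on the length of the word.
-/

theorem List.sublist_iff_exists_map_get_sort {α : Type*} {b c : List α} :
    c.Sublist b ↔ ∃ J : Finset (Fin b.length), (J.sort (· ≤ ·)).map b.get = c := by
  constructor
  · intro h
    obtain ⟨f, hf⟩ := List.sublist_iff_exists_fin_orderEmbedding_get_eq.mp h
    set ls : List (Fin b.length) := (List.finRange c.length).map f with hls
    have hsorted : ls.SortedLT :=
      ((List.pairwise_lt_finRange c.length).map f fun _ _ h => f.strictMono h).sortedLT
    refine ⟨ls.toFinset, ?_⟩
    rw [(List.toFinset_sort (· ≤ ·) hsorted.nodup).mpr hsorted.sortedLE.pairwise, hls,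
      List.map_map]
    have : b.get ∘ f = c.get := funext fun ix => (hf ix).symm
    rw [this, List.map_get_finRange]
  · rintro ⟨J, rfl⟩
    rw [List.sublist_iff_exists_fin_orderEmbedding_get_eq]
    have hlen : ((J.sort (· ≤ ·)).map b.get).length = (J.sort (· ≤ ·)).length :=
      List.length_map _
    refine ⟨OrderEmbedding.ofStrictMono (fun ix => (J.sort (· ≤ ·)).get (Fin.cast hlen ix))
      fun x y hxy => (Finset.sortedLT_sort J).strictMono_get hxy, fun ix => ?_⟩
    simp

section

open Equiv

variable {n : ℕ}

def lo (i : Fin (n - 1)) : Fin n := ⟨i, by have := i.isLt; omega⟩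

def hi (i : Fin (n - 1)) : Fin n := ⟨i + 1, by have := i.isLt; omega⟩

theorem lo_lt_hi (i : Fin (n - 1)) : lo i < hi i := Nat.lt_succ_self _

theorem sTr_eq_swap (i : Fin (n - 1)) : sTr n i = swap (lo i) (hi i) := rfl

@[simp]
theorem sTr_mul_self (i : Fin (n - 1)) : sTr n i * sTr n i = 1 := swap_mul_self _ _

@[simp]
theorem mul_sTr_mul_sTr (w : Perm (Fin n)) (i : Fin (n - 1)) : w * sTr n i * sTr n i = w := by
  rw [mul_assoc, sTr_mul_self, mul_one]

@[simp]
theorem sTr_inv (i : Fin (n - 1)) : (sTr n i)⁻¹ = sTr n i := swap_inv _ _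

@[simp]
theorem sTr_apply_sTr_apply (i : Fin (n - 1)) (a : Fin n) : sTr n i (sTr n i a) = a :=
  swap_apply_self _ _ _

def wordProd (b : List (Fin (n - 1))) : Perm (Fin n) := (b.map (sTr n)).prod

@[simp]
theorem wordProd_nil : wordProd ([] : List (Fin (n - 1))) = 1 := rfl

@[simp]
theorem wordProd_cons (i : Fin (n - 1)) (b : List (Fin (n - 1))) :
    wordProd (i :: b) = sTr n i * wordProd b := List.prod_cons

@[simp]
theorem wordProd_append (b c : List (Fin (n - 1))) :
    wordProd (b ++ c) = wordProd b * wordProd c := by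
  simp [wordProd]

@[simp]
theorem wordProd_singleton (i : Fin (n - 1)) : wordProd [i] = sTr n i := by
  simp [wordProd]

theorem exists_wordProd_eq (w : Perm (Fin n)) : ∃ b, wordProd b = w := by
  cases n with
  | zero => exact ⟨[], Subsingleton.elim _ _⟩
  | succ m =>
    have hw : w ∈ Submonoid.closure (Set.range fun i : Fin m ↦ swap i.castSucc i.succ) := by
      rw [Perm.mclosure_swap_castSucc_succ]; trivial
    induction hw using Submonoid.closure_induction with
    | mem _ h => obtain ⟨i, rfl⟩ := h; exact ⟨[⟨i, by omega⟩], rfl⟩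
    | one => exact ⟨[], rfl⟩
    | mul _ _ _ _ h₁ h₂ =>
      obtain ⟨b, rfl⟩ := h₁
      obtain ⟨c, rfl⟩ := h₂
      exact ⟨b ++ c, wordProd_append b c⟩

theorem len_le_length {b : List (Fin (n - 1))} {w : Perm (Fin n)} (h : wordProd b = w) :
    len n w ≤ b.length :=
  Nat.sInf_le ⟨b, rfl, h⟩

theorem exists_isRedWord (w : Perm (Fin n)) : ∃ b, IsRedWord n b w := by
  obtain ⟨b, hb⟩ := exists_wordProd_eq w
  obtain ⟨c, hc, hcw⟩ := Nat.sInf_mem (⟨b.length, b, rfl, hb⟩ :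
    {k | ∃ l : List (Fin (n - 1)), l.length = k ∧ (l.map (sTr n)).prod = w}.Nonempty)
  exact ⟨c, hcw, hc⟩

theorem IsRedWord.wordProd_eq {b : List (Fin (n - 1))} {w : Perm (Fin n)}
    (h : IsRedWord n b w) : wordProd b = w := h.1

theorem IsRedWord.of_length_le {b : List (Fin (n - 1))} {w : Perm (Fin n)}
    (h : wordProd b = w) (hlen : b.length ≤ len n w) : IsRedWord n b w :=
  ⟨h, le_antisymm hlen (len_le_length h)⟩

theorem isRedWord_nil : IsRedWord n [] 1 :=
  ⟨rfl, (Nat.le_zero.mp (len_le_length (b := []) rfl)).symm⟩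

theorem len_mul_wordProd_le (w : Perm (Fin n)) (c : List (Fin (n - 1))) :
    len n (w * wordProd c) ≤ len n w + c.length := by
  obtain ⟨b, hb⟩ := exists_isRedWord w
  calc len n (w * wordProd c) ≤ (b ++ c).length :=
        len_le_length (by rw [wordProd_append, hb.wordProd_eq])
    _ = len n w + c.length := by rw [List.length_append, hb.2]

theorem len_le_len_mul_sTr_add_one (w : Perm (Fin n)) (i : Fin (n - 1)) :
    len n w ≤ len n (w * sTr n i) + 1 := by
  simpa [mul_assoc] using len_mul_wordProd_le (w * sTr n i) [i]

theorem IsRedWord.append_left {b c : List (Fin (n - 1))} {u : Perm (Fin n)}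
    (h : IsRedWord n (b ++ c) u) : IsRedWord n b (wordProd b) := by
  refine ⟨rfl, le_antisymm ?_ (len_le_length rfl)⟩
  have := len_mul_wordProd_le (wordProd b) c
  rw [← wordProd_append, h.wordProd_eq, ← h.2, List.length_append] at this
  omega

theorem eq_lo_and_eq_hi_of_sTr_apply_lt {i : Fin (n - 1)} {a a' : Fin n} (h : a < a')
    (h' : sTr n i a' < sTr n i a) : a = lo i ∧ a' = hi i := by
  rw [sTr_eq_swap, swap_apply_def, swap_apply_def] at h'
  split_ifs at h' <;> simp only [lo, hi, Fin.lt_def, Fin.ext_iff] at * <;> omega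

theorem exists_wordProd_eraseIdx_eq (b : List (Fin (n - 1))) {p q : Fin n} (hpq : p < q)
    (h : wordProd b q < wordProd b p) :
    ∃ k < b.length, wordProd (b.eraseIdx k) = wordProd b * swap p q := by
  induction b with
  | nil => exact absurd h (not_lt.2 hpq.le)
  | cons i b ih =>
    rw [wordProd_cons, Perm.mul_apply, Perm.mul_apply] at h
    rcases lt_or_gt_of_ne ((wordProd b).injective.ne hpq.ne) with hlt | hgt
    · obtain ⟨hp, hq⟩ := eq_lo_and_eq_hi_of_sTr_apply_lt hlt h
      refine ⟨0, by simp, ?_⟩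
      rw [List.eraseIdx_cons_zero, wordProd_cons, sTr_eq_swap, ← hp, ← hq, swap_apply_apply]
      simp [mul_assoc]
    · obtain ⟨k, hk, hk'⟩ := ih hgt
      exact ⟨k + 1, by simpa using hk, by simp [hk', mul_assoc]⟩

theorem len_mul_swap_lt {w : Perm (Fin n)} {p q : Fin n} (hpq : p < q) (h : w q < w p) :
    len n (w * swap p q) < len n w := by
  obtain ⟨b, hb⟩ := exists_isRedWord w
  rw [← hb.wordProd_eq] at h
  obtain ⟨k, hk, hbk⟩ := exists_wordProd_eraseIdx_eq b hpq h
  have := len_le_length hbk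
  rw [List.length_eraseIdx_of_lt hk, hb.wordProd_eq] at this
  have := hb.2
  omega

theorem len_mul_sTr_lt_iff {w : Perm (Fin n)} {i : Fin (n - 1)} :
    len n (w * sTr n i) < len n w ↔ w (hi i) < w (lo i) := by
  refine ⟨fun h => ?_, len_mul_swap_lt (lo_lt_hi i)⟩
  by_contra! hle
  have hlt : w (lo i) < w (hi i) := hle.lt_of_ne (w.injective.ne (lo_lt_hi i).ne)
  have := len_mul_swap_lt (w := w * sTr n i) (lo_lt_hi i) (by simpa [sTr_eq_swap] using hlt)
  rw [← sTr_eq_swap, mul_sTr_mul_sTr] at this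
  omega

theorem len_lt_len_mul_sTr_iff {w : Perm (Fin n)} {i : Fin (n - 1)} :
    len n w < len n (w * sTr n i) ↔ w (lo i) < w (hi i) := by
  simpa [mul_assoc, sTr_eq_swap] using len_mul_sTr_lt_iff (w := w * sTr n i) (i := i)

theorem exists_sublist_isRedWord_wordProd (b : List (Fin (n - 1))) :
    ∃ c, c.Sublist b ∧ IsRedWord n c (wordProd b) := by
  induction b using List.reverseRecOn with
  | nil => exact ⟨[], .slnil, isRedWord_nil⟩
  | append_singleton b i ih =>
    obtain ⟨c, hcb, hc⟩ := ih
    rw [wordProd_append, wordProd_singleton]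
    have hup := len_mul_wordProd_le (wordProd b) [i]
    have hdown := len_le_len_mul_sTr_add_one (wordProd b) i
    rw [wordProd_singleton, List.length_singleton] at hup
    rcases lt_or_gt_of_ne ((wordProd b).injective.ne (lo_lt_hi i).ne) with hasc | hdesc
    · refine ⟨c ++ [i], hcb.append (.refl _), .of_length_le (by simp [hc.wordProd_eq]) ?_⟩
      have := len_lt_len_mul_sTr_iff.2 hasc
      rw [List.length_append, List.length_singleton, hc.2]
      omega
    · obtain ⟨k, hk, hck⟩ := exists_wordProd_eraseIdx_eq c (lo_lt_hi i) (by rwa [hc.wordProd_eq])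
      rw [hc.wordProd_eq, ← sTr_eq_swap] at hck
      refine ⟨c.eraseIdx k, (c.eraseIdx_sublist k).trans (hcb.trans (b.sublist_append_left _)),
        .of_length_le hck ?_⟩
      rw [List.length_eraseIdx_of_lt hk, hc.2]
      omega

def SwapDown (y x : Perm (Fin n)) : Prop :=
  ∃ p q : Fin n, p < q ∧ y q < y p ∧ x = y * swap p q

def SwapLE (v u : Perm (Fin n)) : Prop :=
  Relation.ReflTransGen SwapDown u v

theorem SwapLE.refl (u : Perm (Fin n)) : SwapLE u u := Relation.ReflTransGen.refl

theorem SwapLE.trans {x y z : Perm (Fin n)} (hxy : SwapLE x y) (hyz : SwapLE y z) :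
    SwapLE x z :=
  Relation.ReflTransGen.trans hyz hxy

theorem SwapDown.swapLE {x y : Perm (Fin n)} (h : SwapDown y x) : SwapLE x y :=
  Relation.ReflTransGen.single h

theorem swapLE_mul_sTr_of_len_lt {u : Perm (Fin n)} {i : Fin (n - 1)}
    (h : len n (u * sTr n i) < len n u) : SwapLE (u * sTr n i) u :=
  SwapDown.swapLE ⟨lo i, hi i, lo_lt_hi i, len_mul_sTr_lt_iff.1 h, rfl⟩

theorem SwapDown.exists_sublist_isRedWord {x y : Perm (Fin n)} {b : List (Fin (n - 1))}
    (h : SwapDown y x) (hb : IsRedWord n b y) : ∃ c, c.Sublist b ∧ IsRedWord n c x := by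
  obtain ⟨p, q, hpq, hqp, rfl⟩ := h
  obtain ⟨k, -, hbk⟩ := exists_wordProd_eraseIdx_eq b hpq (by rwa [hb.wordProd_eq])
  obtain ⟨c, hc, hcred⟩ := exists_sublist_isRedWord_wordProd (b.eraseIdx k)
  rw [hbk, hb.wordProd_eq] at hcred
  exact ⟨c, hc.trans (b.eraseIdx_sublist k), hcred⟩

theorem SwapLE.exists_sublist_isRedWord {u v : Perm (Fin n)} {b : List (Fin (n - 1))}
    (h : SwapLE v u) (hb : IsRedWord n b u) : ∃ c, c.Sublist b ∧ IsRedWord n c v := by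
  induction h with
  | refl => exact ⟨b, .refl b, hb⟩
  | tail _ hyx ih =>
    obtain ⟨c, hcb, hc⟩ := ih
    obtain ⟨d, hdc, hd⟩ := hyx.exists_sublist_isRedWord hc
    exact ⟨d, hdc.trans hcb, hd⟩

theorem SwapDown.mul_sTr {x y : Perm (Fin n)} (h : SwapDown y x) (i : Fin (n - 1)) :
    x * sTr n i = y ∨ SwapDown (y * sTr n i) (x * sTr n i) := by
  obtain ⟨p, q, hpq, hqp, rfl⟩ := h
  rcases lt_or_gt_of_ne ((sTr n i).injective.ne hpq.ne) with hlt | hgt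
  · refine .inr ⟨sTr n i p, sTr n i q, hlt, by simpa using hqp, ?_⟩
    simp only [swap_apply_apply, sTr_inv, ← mul_assoc, mul_sTr_mul_sTr]
  · obtain ⟨rfl, rfl⟩ := eq_lo_and_eq_hi_of_sTr_apply_lt hpq hgt
    simp [mul_assoc, ← sTr_eq_swap]

theorem SwapLE.mul_sTr {x y : Perm (Fin n)} (h : SwapLE x y) (i : Fin (n - 1)) :
    SwapLE (x * sTr n i) y ∨ SwapLE (x * sTr n i) (y * sTr n i) := by
  induction h using Relation.ReflTransGen.head_induction_on with
  | refl => exact .inr (.refl _)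
  | head hyz hzx ih =>
    rcases ih with ih | ih
    · exact .inl (ih.trans hyz.swapLE)
    · rcases hyz.mul_sTr i with hzy | hzy
      · exact .inl (hzy ▸ ih)
      · exact .inr (ih.trans hzy.swapLE)

theorem swapLE_wordProd_of_sublist {u : Perm (Fin n)} {b c : List (Fin (n - 1))}
    (hb : IsRedWord n b u) (hcb : c.Sublist b) : SwapLE (wordProd c) u := by
  induction b using List.reverseRecOn generalizing u c with
  | nil =>
    rw [List.sublist_nil.1 hcb, ← hb.wordProd_eq]
    exact .refl _
  | append_singleton b i ih =>
    have hb' := hb.append_left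
    have hu : u = wordProd b * sTr n i := by simp [← hb.wordProd_eq]
    have hbu : SwapLE (wordProd b) u := by
      have hlen : len n (u * sTr n i) < len n u := by
        rw [← hb.2, hu, mul_sTr_mul_sTr, ← hb'.2, List.length_append, List.length_singleton]
        omega
      simpa [hu, mul_assoc] using swapLE_mul_sTr_of_len_lt hlen
    obtain ⟨c₁, c₂, rfl, h₁, h₂⟩ := List.sublist_append_iff.1 hcb
    rcases List.sublist_singleton.1 h₂ with rfl | rfl
    · simpa using (ih hb' h₁).trans hbu
    · rw [wordProd_append, wordProd_singleton, hu]
      exact ((ih hb' h₁).mul_sTr i).elim (fun h => h.trans (hu ▸ hbu)) id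

theorem bruhatLE_iff_exists_sublist {u v : Perm (Fin n)} {b : List (Fin (n - 1))}
    (hb : IsRedWord n b u) : bruhatLE n v u ↔ ∃ c, c.Sublist b ∧ IsRedWord n c v := by
  refine ⟨fun ⟨b', hb', c, hcb', hc⟩ => ?_, fun h => ⟨b, hb, h⟩⟩
  have := swapLE_wordProd_of_sublist hb' hcb'
  rw [hc.wordProd_eq] at this
  exact this.exists_sublist_isRedWord hb

theorem wordProd_take_apply_lo_lt_apply_hi {u : Perm (Fin n)} {b : List (Fin (n - 1))}
    (hb : IsRedWord n b u) (j : Fin b.length) :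
    wordProd (b.take j) (lo (b.get j)) < wordProd (b.take j) (hi (b.get j)) := by
  have hred : IsRedWord n (b.take j ++ [b.get j]) (wordProd (b.take j ++ [b.get j])) := by
    rw [List.get_eq_getElem, ← List.take_succ_eq_append_getElem j.2]
    rw [← b.take_append_drop (j + 1)] at hb
    exact hb.append_left
  apply len_lt_len_mul_sTr_iff.1
  have := len_le_length (b := b.take j) rfl
  have := hred.2
  simp only [List.length_append, List.length_singleton, wordProd_append,
    wordProd_singleton] at this
  omega

theorem exists_eval_rPoly_eq_natCast_pos {u : Perm (Fin n)} {b : List (Fin (n - 1))}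
    (hb : IsRedWord n b u) (j : Fin b.length) :
    ∃ m : ℕ, 0 < m ∧ eval (fun k : Fin n => -(k : ℂ)) (rPoly n b j) = m := by
  set w := wordProd (b.take j)
  have h := wordProd_take_apply_lo_lt_apply_hi hb j
  refine ⟨(w (hi (b.get j)) : ℕ) - w (lo (b.get j)), Nat.sub_pos_of_lt h, ?_⟩
  change eval _ (rename w (X (lo (b.get j)) - X (hi (b.get j)))) = _
  rw [eval_rename, map_sub, eval_X, eval_X, Nat.cast_sub h.le]
  simp only [Function.comp_apply]
  ring

theorem billeyWord_ne_zero_iff {u v : Perm (Fin n)} {b : List (Fin (n - 1))}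
    (hb : IsRedWord n b u) :
    billeyWord n b v ≠ 0 ↔ ∃ J : Finset (Fin b.length), J.card = len n v ∧
      ((J.sort (· ≤ ·)).map fun j => sTr n (b.get j)).prod = v := by
  constructor
  · intro h
    obtain ⟨J, hJ, -⟩ := Finset.exists_ne_zero_of_sum_ne_zero h
    exact ⟨J, (Finset.mem_filter.1 hJ).2⟩
  · rintro ⟨J, hJ⟩ h
    choose m hm_pos hm using exists_eval_rPoly_eq_natCast_pos hb
    have := congrArg (eval fun k : Fin n => -(k : ℂ)) h
    simp only [billeyWord, map_sum, map_prod, hm, map_zero] at this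
    norm_cast at this
    refine (Finset.sum_pos (fun J _ => Finset.prod_pos fun j _ => hm_pos j) ⟨J, ?_⟩).ne' this
    exact Finset.mem_filter.2 ⟨Finset.mem_univ _, hJ⟩

theorem exists_sublist_isRedWord_iff_exists_finset {b : List (Fin (n - 1))} {v : Perm (Fin n)} :
    (∃ c, c.Sublist b ∧ IsRedWord n c v) ↔ ∃ J : Finset (Fin b.length), J.card = len n v ∧
      ((J.sort (· ≤ ·)).map fun j => sTr n (b.get j)).prod = v := by
  simp only [List.sublist_iff_exists_map_get_sort]
  constructor
  · rintro ⟨_, ⟨J, rfl⟩, hprod, hlen⟩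
    rw [List.length_map, Finset.length_sort] at hlen
    exact ⟨J, hlen, by rwa [List.map_map] at hprod⟩
  · rintro ⟨J, hcard, hprod⟩
    exact ⟨_, ⟨J, rfl⟩, by rwa [List.map_map],
      by rw [List.length_map, Finset.length_sort, hcard]⟩

end

theorem billey_ne_zero_iff_bruhat_le_general (n : ℕ) (u v : Equiv.Perm (Fin n))
    (b : List (Fin (n - 1))) (hb : IsRedWord n b u) :
    billeyWord n b v ≠ 0 ↔ bruhatLE n v u := by
  rw [billeyWord_ne_zero_iff hb, ← exists_sublist_isRedWord_iff_exists_finset,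
    bruhatLE_iff_exists_sublist hb]

/-- For every `u, v ∈ W` and every choice of reduced word for `u`, the
Billey polynomial `σ_v(u)` is nonzero if and only if `v ≤ u` in Bruhat order. -/
theorem billey_ne_zero_iff_bruhat_le (n : ℕ) (hn : 2 ≤ n) (u v : Equiv.Perm (Fin n))
    (b : List (Fin (n - 1))) (hb : IsRedWord n b u) :
    billeyWord n b v ≠ 0 ↔ bruhatLE n v u :=
  billey_ne_zero_iff_bruhat_le_general n u v b hb

end
end

section
/- Fix P ⊆ {1,…,n−1}. Let v ∈ W^P, w ∈ W_P, and u ∈ W, and suppose that the pointwise product of Schubert classes σ_v·σ_w equals the single Schubert class σ_u as functions W → R (i.e. σ_v(z)·σ_w(z) = σ_u(z) for all z ∈ W). Then u = vw. -/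
noncomputable section

open MvPolynomial
open scoped Classical

/-!
Evaluating at `xₖ = -k` makes every root `r(j, z)` of a reduced word of `z` positive, so
`σ_v(z) ≠ 0` as soon as some reduced word of `z` contains a reduced word of `v`; in
particular `σ_u(u) ≠ 0`. Comparing degrees in `σ_v(u) σ_w(u) = σ_u(u)` gives
`ℓ(u) = ℓ(v) + ℓ(w)`, which is `ℓ(vw)`: lengths are inversion counts, and the inversions of
`vw` split into those inside the blocks of `P` (the inversions of `w`) and those across blocks
(the inversions of `v`). When lengths add, the exchange property shows that every reduced word
of `vw` contains reduced words of `v` and of `w`, so `σ_u(vw) = σ_v(vw) σ_w(vw) ≠ 0`. Hence `u`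
is the product of a subword of length `ℓ(u) = ℓ(vw)` of a reduced word of `vw`, i.e. of the
whole word: `u = vw`.
-/

namespace Billey

variable {n : ℕ}

def lo (n : ℕ) (i : Fin (n - 1)) : Fin n := ⟨i.1, by have := i.isLt; omega⟩

def hi (n : ℕ) (i : Fin (n - 1)) : Fin n := ⟨i.1 + 1, by have := i.isLt; omega⟩

lemma sTr_eq_swap (i : Fin (n - 1)) : sTr n i = Equiv.swap (lo n i) (hi n i) := rfl

lemma lo_lt_hi (i : Fin (n - 1)) : lo n i < hi n i := by
  simp [lo, hi, Fin.lt_def]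

@[simp] lemma sTr_mul_self (i : Fin (n - 1)) : sTr n i * sTr n i = 1 :=
  Equiv.swap_mul_self _ _

@[simp] lemma sTr_inv (i : Fin (n - 1)) : (sTr n i)⁻¹ = sTr n i :=
  Equiv.swap_inv _ _

@[simp] lemma sTr_sTr_apply (i : Fin (n - 1)) (x : Fin n) : sTr n i (sTr n i x) = x :=
  Equiv.swap_apply_self _ _ _

@[simp] lemma sTr_apply_lo (i : Fin (n - 1)) : sTr n i (lo n i) = hi n i :=
  Equiv.swap_apply_left _ _

@[simp] lemma sTr_apply_hi (i : Fin (n - 1)) : sTr n i (hi n i) = lo n i :=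
  Equiv.swap_apply_right _ _

lemma val_sTr_apply (i : Fin (n - 1)) (x : Fin n) :
    (sTr n i x).1 = if x.1 = i.1 then i.1 + 1 else if x.1 = i.1 + 1 then i.1 else x.1 := by
  rw [sTr_eq_swap, Equiv.swap_apply_def]
  simp only [Fin.ext_iff, lo, hi]
  split_ifs <;> rfl

lemma sTr_lt_sTr {i : Fin (n - 1)} {p q : Fin n} (hpq : p < q)
    (hne : (p, q) ≠ (lo n i, hi n i)) : sTr n i p < sTr n i q := by
  have hne' : ¬(p.1 = i.1 ∧ q.1 = i.1 + 1) := fun ⟨h1, h2⟩ =>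
    hne (Prod.ext (Fin.ext h1) (Fin.ext h2))
  rw [Fin.lt_def] at hpq ⊢
  rw [val_sTr_apply, val_sTr_apply]
  split_ifs <;> omega

lemma apply_lo_ne_apply_hi (w : Equiv.Perm (Fin n)) (i : Fin (n - 1)) :
    w (lo n i) ≠ w (hi n i) :=
  w.injective.ne (lo_lt_hi i).ne

def wordProd (n : ℕ) (l : List (Fin (n - 1))) : Equiv.Perm (Fin n) := (l.map (sTr n)).prod

@[simp] lemma wordProd_nil : wordProd n [] = 1 := rfl

@[simp] lemma wordProd_cons (i : Fin (n - 1)) (l : List (Fin (n - 1))) :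
    wordProd n (i :: l) = sTr n i * wordProd n l := by
  simp [wordProd]

@[simp] lemma wordProd_append (l l' : List (Fin (n - 1))) :
    wordProd n (l ++ l') = wordProd n l * wordProd n l' := by
  simp [wordProd]

@[simp] lemma wordProd_reverse (l : List (Fin (n - 1))) :
    wordProd n l.reverse = (wordProd n l)⁻¹ := by
  induction l with
  | nil => simp
  | cons i l ih => simp [ih]

lemma wordProd_take_mul_drop (l : List (Fin (n - 1))) (j : ℕ) :
    wordProd n (l.take j) * wordProd n (l.drop j) = wordProd n l := by
  rw [← wordProd_append, List.take_append_drop]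

def SameBlock (P : Set (Fin (n - 1))) (i j : Fin n) : Prop :=
  ∀ k : Fin (n - 1), min i.1 j.1 ≤ k.1 → k.1 < max i.1 j.1 → k ∈ P

section SameBlock

variable {P : Set (Fin (n - 1))}

lemma SameBlock.refl (i : Fin n) : SameBlock P i i := by
  intro k h1 h2; omega

lemma SameBlock.symm {i j : Fin n} (h : SameBlock P i j) : SameBlock P j i := by
  intro k h1 h2
  exact h k (by omega) (by omega)

lemma SameBlock.trans {i j l : Fin n} (h1 : SameBlock P i j) (h2 : SameBlock P j l) :
    SameBlock P i l := by
  intro k hk1 hk2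
  by_cases hc : min i.1 j.1 ≤ k.1 ∧ k.1 < max i.1 j.1
  · exact h1 k hc.1 hc.2
  · exact h2 k (by omega) (by omega)

lemma lt_of_sameBlock {v : Equiv.Perm (Fin n)} (hv : ∀ p ∈ P, v (lo n p) < v (hi n p))
    {i j : Fin n} (hij : i < j) (hb : SameBlock P i j) : v i < v j := by
  obtain ⟨j, hj⟩ := j
  simp only [Fin.lt_def] at hij
  induction j, hij using Nat.le_induction with
  | base =>
    have hp : (⟨i.1, by omega⟩ : Fin (n - 1)) ∈ P := hb _ (by simp) (by simp)
    exact hv _ hp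
  | succ m hm ih =>
    have hp : (⟨m, by omega⟩ : Fin (n - 1)) ∈ P := hb _ (by simp; omega) (by simp)
    refine (ih (by omega) fun k hk1 hk2 => hb k ?_ ?_).trans (hv _ hp) <;>
      dsimp only at hk1 hk2 ⊢ <;> omega

end SameBlock

lemma eq_one_of_forall_lo_lt_hi {w : Equiv.Perm (Fin n)}
    (h : ∀ i, w (lo n i) < w (hi n i)) : w = 1 := by
  have hmono : StrictMono w := fun i j hij =>
    lt_of_sameBlock (P := Set.univ) (fun p _ => h p) hij fun _ _ _ => trivial
  ext1 x
  exact congrFun ((hmono.range_inj strictMono_id).1 (by simp [w.surjective.range_eq])) x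

lemma exists_hi_lt_lo {w : Equiv.Perm (Fin n)} (hw : w ≠ 1) :
    ∃ i, w (hi n i) < w (lo n i) := by
  by_contra! h
  exact hw (eq_one_of_forall_lo_lt_hi fun i => (h i).lt_of_ne (apply_lo_ne_apply_hi w i))

def inversions (n : ℕ) (w : Equiv.Perm (Fin n)) : Finset (Fin n × Fin n) :=
  Finset.univ.filter fun p => p.1 < p.2 ∧ w p.2 < w p.1

lemma mem_inversions {w : Equiv.Perm (Fin n)} {p : Fin n × Fin n} :
    p ∈ inversions n w ↔ p.1 < p.2 ∧ w p.2 < w p.1 := by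
  simp [inversions]

@[simp] lemma inversions_one : inversions n 1 = ∅ := by
  ext p
  simpa [mem_inversions] using le_of_lt

lemma inversions_eq_empty_iff {w : Equiv.Perm (Fin n)} : inversions n w = ∅ ↔ w = 1 := by
  refine ⟨fun h => ?_, fun h => h ▸ inversions_one⟩
  by_contra hw
  obtain ⟨i, hdesc⟩ := exists_hi_lt_lo hw
  have : (lo n i, hi n i) ∈ inversions n w := mem_inversions.2 ⟨lo_lt_hi i, hdesc⟩
  simp [h] at this

lemma sTr_mem_inversions_erase {w : Equiv.Perm (Fin n)} {i : Fin (n - 1)} {p : Fin n × Fin n}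
    (hp : p ∈ (inversions n (w * sTr n i)).erase (lo n i, hi n i)) :
    (sTr n i p.1, sTr n i p.2) ∈ (inversions n w).erase (lo n i, hi n i) := by
  obtain ⟨p, q⟩ := p
  simp only [Finset.mem_erase, mem_inversions, Equiv.Perm.mul_apply] at hp ⊢
  obtain ⟨hne, hpq, hw⟩ := hp
  refine ⟨fun h => ?_, sTr_lt_sTr hpq hne, hw⟩
  obtain ⟨h1, h2⟩ := Prod.ext_iff.1 h
  have hp : p = hi n i := by simpa using congrArg (sTr n i) h1
  have hq : q = lo n i := by simpa using congrArg (sTr n i) h2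
  exact (lo_lt_hi i).not_gt (hp ▸ hq ▸ hpq)

/-- Right multiplication by `sᵢ` permutes the inversions other than `(i, i+1)`. -/
lemma card_inversions_mul_sTr_of_lt {w : Equiv.Perm (Fin n)} {i : Fin (n - 1)}
    (h : w (lo n i) < w (hi n i)) :
    (inversions n (w * sTr n i)).card = (inversions n w).card + 1 := by
  have hmem : (lo n i, hi n i) ∈ inversions n (w * sTr n i) := by
    simpa [mem_inversions] using ⟨lo_lt_hi i, h⟩
  have hnmem : (lo n i, hi n i) ∉ inversions n w := by
    simpa [mem_inversions] using fun _ => h.le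
  have hbij : ((inversions n (w * sTr n i)).erase (lo n i, hi n i)).card =
      ((inversions n w).erase (lo n i, hi n i)).card := by
    refine Finset.card_nbij' (fun p => (sTr n i p.1, sTr n i p.2))
      (fun p => (sTr n i p.1, sTr n i p.2)) (fun p hp => sTr_mem_inversions_erase hp)
      (fun p hp => ?_) (fun p _ => by simp) (fun p _ => by simp)
    exact sTr_mem_inversions_erase (w := w * sTr n i)
      (by simpa [mul_assoc, and_comm] using hp)
  rw [← Finset.card_erase_add_one hmem, hbij, Finset.erase_eq_of_notMem hnmem]

lemma card_inversions_mul_sTr_of_gt {w : Equiv.Perm (Fin n)} {i : Fin (n - 1)}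
    (h : w (hi n i) < w (lo n i)) :
    (inversions n (w * sTr n i)).card + 1 = (inversions n w).card := by
  have h' : (w * sTr n i) (lo n i) < (w * sTr n i) (hi n i) := by simpa using h
  simpa [mul_assoc] using (card_inversions_mul_sTr_of_lt h').symm

lemma card_inversions_mul_sTr_le (w : Equiv.Perm (Fin n)) (i : Fin (n - 1)) :
    (inversions n (w * sTr n i)).card ≤ (inversions n w).card + 1 := by
  rcases (apply_lo_ne_apply_hi w i).lt_or_gt with h | h
  · exact (card_inversions_mul_sTr_of_lt h).le
  · have := card_inversions_mul_sTr_of_gt h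
    omega

lemma card_inversions_wordProd_le (l : List (Fin (n - 1))) :
    (inversions n (wordProd n l)).card ≤ l.length := by
  induction l using List.reverseRecOn with
  | nil => simp
  | append_singleton l i ih =>
    have := card_inversions_mul_sTr_le (wordProd n l) i
    simp only [wordProd_append, wordProd_cons, wordProd_nil, mul_one, List.length_append,
      List.length_singleton]
    omega

lemma exists_wordProd_eq_length_eq_card_inversions (w : Equiv.Perm (Fin n)) :
    ∃ l, wordProd n l = w ∧ l.length = (inversions n w).card := by
  induction hk : (inversions n w).card generalizing w with
  | zero => exact ⟨[], (inversions_eq_empty_iff.1 (Finset.card_eq_zero.1 hk)).symm, rfl⟩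
  | succ k ih =>
    obtain ⟨i, hdesc⟩ := exists_hi_lt_lo (w := w) (by rintro rfl; simp at hk)
    have hcard := card_inversions_mul_sTr_of_gt hdesc
    obtain ⟨l, hl, hlen⟩ := ih (w * sTr n i) (by omega)
    exact ⟨l ++ [i], by simp [hl, mul_assoc], by simp [hlen]⟩

lemma len_le_length {l : List (Fin (n - 1))} {w : Equiv.Perm (Fin n)} (h : wordProd n l = w) :
    len n w ≤ l.length :=
  Nat.sInf_le ⟨l, rfl, h⟩

lemma len_eq_card_inversions (w : Equiv.Perm (Fin n)) : len n w = (inversions n w).card := by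
  obtain ⟨l, hl, hlen⟩ := exists_wordProd_eq_length_eq_card_inversions w
  refine le_antisymm (hlen ▸ len_le_length hl) (le_csInf ⟨_, l, rfl, hl⟩ ?_)
  rintro k ⟨l', rfl, hl'⟩
  exact hl' ▸ card_inversions_wordProd_le l'

lemma exists_isRedWord (w : Equiv.Perm (Fin n)) : ∃ l, IsRedWord n l w := by
  obtain ⟨l, hl, hlen⟩ := exists_wordProd_eq_length_eq_card_inversions w
  exact ⟨l, hl, by rw [len_eq_card_inversions, hlen]⟩

lemma len_eq_zero_iff {w : Equiv.Perm (Fin n)} : len n w = 0 ↔ w = 1 := by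
  rw [len_eq_card_inversions, Finset.card_eq_zero, inversions_eq_empty_iff]

@[simp] lemma len_one : len n (1 : Equiv.Perm (Fin n)) = 0 := len_eq_zero_iff.2 rfl

lemma len_mul_sTr_of_lt {w : Equiv.Perm (Fin n)} {i : Fin (n - 1)}
    (h : w (lo n i) < w (hi n i)) : len n (w * sTr n i) = len n w + 1 := by
  simp only [len_eq_card_inversions, card_inversions_mul_sTr_of_lt h]

lemma len_mul_sTr_of_gt {w : Equiv.Perm (Fin n)} {i : Fin (n - 1)}
    (h : w (hi n i) < w (lo n i)) : len n (w * sTr n i) + 1 = len n w := by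
  simp only [len_eq_card_inversions, card_inversions_mul_sTr_of_gt h]

lemma len_mul_sTr_le (w : Equiv.Perm (Fin n)) (i : Fin (n - 1)) :
    len n (w * sTr n i) ≤ len n w + 1 := by
  simp only [len_eq_card_inversions, card_inversions_mul_sTr_le]

lemma len_mul_le (a b : Equiv.Perm (Fin n)) : len n (a * b) ≤ len n a + len n b := by
  obtain ⟨la, ha, hla⟩ := exists_isRedWord a
  obtain ⟨lb, hb, hlb⟩ := exists_isRedWord b
  calc len n (a * b) ≤ (la ++ lb).length := len_le_length (by simp [wordProd, ← ha, ← hb])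
    _ = len n a + len n b := by simp [hla, hlb]

lemma len_inv_le (w : Equiv.Perm (Fin n)) : len n w⁻¹ ≤ len n w := by
  obtain ⟨l, hl, hlen⟩ := exists_isRedWord w
  calc len n w⁻¹ ≤ l.reverse.length :=
        len_le_length (by rw [wordProd_reverse]; exact congrArg _ hl)
    _ = len n w := by rw [List.length_reverse, hlen]

@[simp] lemma len_inv (w : Equiv.Perm (Fin n)) : len n w⁻¹ = len n w :=
  le_antisymm (len_inv_le w) (by simpa using len_inv_le w⁻¹)

lemma IsRedWord.reverse {l : List (Fin (n - 1))} {w : Equiv.Perm (Fin n)}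
    (h : IsRedWord n l w) : IsRedWord n l.reverse w⁻¹ :=
  ⟨by rw [← h.1]; exact wordProd_reverse l, by simpa using h.2⟩

lemma hi_lt_lo_of_len_mul_sTr_lt {w : Equiv.Perm (Fin n)} {i : Fin (n - 1)}
    (h : len n (w * sTr n i) < len n w) : w (hi n i) < w (lo n i) := by
  refine ((apply_lo_ne_apply_hi w i).symm.lt_or_gt).resolve_right fun hlt => ?_
  rw [len_mul_sTr_of_lt hlt] at h
  omega

lemma IsRedWord.length_take_le {b : List (Fin (n - 1))} {z : Equiv.Perm (Fin n)}
    (hb : IsRedWord n b z) (j : ℕ) : (b.take j).length ≤ len n (wordProd n (b.take j)) := by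
  have hsplit := len_mul_le (wordProd n (b.take j)) (wordProd n (b.drop j))
  have hdrop := len_le_length (l := b.drop j) rfl
  rw [wordProd_take_mul_drop, show wordProd n b = z from hb.1, hb.2.symm] at hsplit
  simp only [List.length_take, List.length_drop] at hdrop ⊢
  omega

/-- Along a reduced word the roots `r(j, z)` are all positive. -/
lemma IsRedWord.wordProd_take_lo_lt_hi {b : List (Fin (n - 1))} {z : Equiv.Perm (Fin n)}
    (hb : IsRedWord n b z) (j : Fin b.length) :
    wordProd n (b.take j) (lo n (b.get j)) < wordProd n (b.take j) (hi n (b.get j)) := by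
  refine ((apply_lo_ne_apply_hi _ _).lt_or_gt).resolve_right fun hdesc => ?_
  have hlen := len_mul_sTr_of_gt hdesc
  have hj := IsRedWord.length_take_le hb (j + 1)
  have hj' := len_le_length (l := b.take j) rfl
  rw [List.take_succ_eq_append_getElem j.isLt, wordProd_append] at hj
  simp only [List.length_append, List.length_take, List.length_singleton, wordProd_cons,
    wordProd_nil, mul_one, List.get_eq_getElem] at hj hj' hlen
  omega

lemma sTr_mul_eq_mul_sTr {y : Equiv.Perm (Fin n)} {i c : Fin (n - 1)}
    (hlo : y (lo n i) = lo n c) (hhi : y (hi n i) = hi n c) : sTr n c * y = y * sTr n i := by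
  rw [sTr_eq_swap c, ← hlo, ← hhi, Equiv.swap_apply_apply, sTr_eq_swap, inv_mul_cancel_right]

/-- The exchange property. -/
lemma exists_eraseIdx_of_hi_lt_lo {b : List (Fin (n - 1))} {i : Fin (n - 1)}
    (h : wordProd n b (hi n i) < wordProd n b (lo n i)) :
    ∃ j < b.length, wordProd n b * sTr n i = wordProd n (b.eraseIdx j) := by
  set x : ℕ → Equiv.Perm (Fin n) := fun j => wordProd n (b.drop j) with hx
  have hx_of_le : ∀ j, b.length ≤ j → x j (lo n i) < x j (hi n i) := by
    intro j hj
    simp [hx, List.drop_eq_nil_of_le hj, lo_lt_hi]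
  obtain ⟨j, hj, hj1⟩ := Nat.exists_not_and_succ_of_not_zero_of_exists
    (p := fun j => x j (lo n i) < x j (hi n i)) (by simpa [hx] using h.le)
    ⟨_, hx_of_le _ le_rfl⟩
  have hjlen : j < b.length := by
    by_contra! hle
    exact hj (hx_of_le j hle)
  have hxj : x j = sTr n b[j] * x (j + 1) := by
    simp only [hx]
    rw [List.drop_eq_getElem_cons hjlen, wordProd_cons]
  -- `x j` reverses the pair that `x (j + 1)` keeps in order, so `x (j + 1)` sends it to the
  -- pair swapped by the letter `b[j]`
  have hpair : (x (j + 1) (lo n i), x (j + 1) (hi n i)) = (lo n b[j], hi n b[j]) := by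
    by_contra hne
    exact hj (by rw [hxj]; exact sTr_lt_sTr hj1 hne)
  obtain ⟨hlo, hhi⟩ := Prod.ext_iff.1 hpair
  refine ⟨j, hjlen, ?_⟩
  rw [← wordProd_take_mul_drop b j, List.eraseIdx_eq_take_drop_succ, wordProd_append]
  change _ * x j * _ = _ * x (j + 1)
  rw [hxj, sTr_mul_eq_mul_sTr hlo hhi, mul_assoc, mul_assoc, sTr_mul_self, mul_one]

lemma exists_sublist_isRedWord_left {v w : Equiv.Perm (Fin n)} {b : List (Fin (n - 1))}
    (hadd : len n (v * w) = len n v + len n w) (hb : IsRedWord n b (v * w)) :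
    ∃ l, l.Sublist b ∧ IsRedWord n l v := by
  induction hk : len n w generalizing w b with
  | zero =>
    obtain rfl := len_eq_zero_iff.1 hk
    exact ⟨b, List.Sublist.refl b, by simpa using hb⟩
  | succ k ih =>
    obtain ⟨i, hdesc⟩ := exists_hi_lt_lo (w := w) (by rintro rfl; simp at hk)
    have hw := len_mul_sTr_of_gt hdesc
    have hback := len_mul_sTr_le (v * (w * sTr n i)) i
    rw [mul_assoc, mul_assoc, sTr_mul_self, mul_one] at hback
    have hadd' : len n (v * (w * sTr n i)) = len n v + len n (w * sTr n i) :=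
      le_antisymm (len_mul_le _ _) (by omega)
    have hbw : wordProd n b = v * w := hb.1
    have hdesc' : wordProd n b (hi n i) < wordProd n b (lo n i) := by
      refine hbw ▸ hi_lt_lo_of_len_mul_sTr_lt ?_
      rw [mul_assoc]
      omega
    obtain ⟨j, hj, hex⟩ := exists_eraseIdx_of_hi_lt_lo hdesc'
    have hred : IsRedWord n (b.eraseIdx j) (v * (w * sTr n i)) := by
      refine ⟨?_, ?_⟩
      · change wordProd n _ = _
        rw [← hex, hbw, mul_assoc]
      · rw [List.length_eraseIdx_of_lt hj, hb.2]
        omega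
    obtain ⟨l, hl, hlv⟩ := ih hadd' hred (by omega)
    exact ⟨l, hl.trans (List.eraseIdx_sublist b j), hlv⟩

lemma exists_sublist_isRedWord_right {v w : Equiv.Perm (Fin n)} {b : List (Fin (n - 1))}
    (hadd : len n (v * w) = len n v + len n w) (hb : IsRedWord n b (v * w)) :
    ∃ l, l.Sublist b ∧ IsRedWord n l w := by
  have hadd' : len n (w⁻¹ * v⁻¹) = len n w⁻¹ + len n v⁻¹ := by
    rw [← mul_inv_rev, len_inv, len_inv, len_inv, hadd, add_comm]
  obtain ⟨l, hl, hlw⟩ :=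
    exists_sublist_isRedWord_left hadd' (by simpa using IsRedWord.reverse hb)
  exact ⟨l.reverse, by simpa using hl.reverse, by simpa using IsRedWord.reverse hlw⟩

section Parabolic

variable {P : Set (Fin (n - 1))}

lemma sameBlock_sTr_apply {p : Fin (n - 1)} (hp : p ∈ P) (x : Fin n) :
    SameBlock P (sTr n p x) x := by
  intro k hk1 hk2
  have hv := val_sTr_apply p x
  have hkp : k = p := by
    apply Fin.ext
    split_ifs at hv <;> omega
  exact hkp ▸ hp

lemma sameBlock_apply_of_mem_WPar {w : Equiv.Perm (Fin n)} (hw : w ∈ WPar n P) (x : Fin n) :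
    SameBlock P (w x) x := by
  induction hw using Subgroup.closure_induction generalizing x with
  | mem g hg =>
    obtain ⟨p, hp, rfl⟩ := hg
    exact sameBlock_sTr_apply hp x
  | one => exact SameBlock.refl x
  | mul g₁ g₂ _ _ ih₁ ih₂ => exact (ih₁ (g₂ x)).trans (ih₂ x)
  | inv g _ ih => simpa using (ih (g⁻¹ x)).symm

lemma sameBlock_apply_iff {w : Equiv.Perm (Fin n)} (hw : w ∈ WPar n P) {x y : Fin n} :
    SameBlock P (w x) (w y) ↔ SameBlock P x y :=
  ⟨fun h => (sameBlock_apply_of_mem_WPar hw x).symm.trans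
      (h.trans (sameBlock_apply_of_mem_WPar hw y)),
    fun h => (sameBlock_apply_of_mem_WPar hw x).trans
      (h.trans (sameBlock_apply_of_mem_WPar hw y).symm)⟩

lemma lt_of_not_sameBlock {i j a b : Fin n} (hij : i < j) (hnb : ¬SameBlock P i j)
    (ha : SameBlock P a i) (hb : SameBlock P b j) : a < b := by
  simp only [SameBlock, not_forall] at hnb
  obtain ⟨k, hk1, hk2, hkP⟩ := hnb
  rw [Fin.lt_def] at hij ⊢
  have hak : a.1 ≤ k := by
    by_contra! hc
    exact hkP (ha k (by omega) (by omega))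
  have hkb : k.1 < b.1 := by
    by_contra! hc
    exact hkP (hb k (by omega) (by omega))
  omega

lemma lo_lt_hi_of_mem_minReps {v : Equiv.Perm (Fin n)} (hv : v ∈ minReps n P)
    {p : Fin (n - 1)} (hp : p ∈ P) : v (lo n p) < v (hi n p) := by
  refine ((apply_lo_ne_apply_hi v p).lt_or_gt).resolve_right fun hdesc => ?_
  have := hv (sTr n p) (Subgroup.subset_closure ⟨p, hp, rfl⟩)
  have := len_mul_sTr_of_gt hdesc
  omega

lemma apply_lt_apply_of_mem_minReps {v : Equiv.Perm (Fin n)} (hv : v ∈ minReps n P)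
    {i j : Fin n} (hij : i < j) (hb : SameBlock P i j) : v i < v j :=
  lt_of_sameBlock (fun _ hp => lo_lt_hi_of_mem_minReps hv hp) hij hb

lemma filter_sameBlock_inversions_mul {v w : Equiv.Perm (Fin n)} (hv : v ∈ minReps n P)
    (hw : w ∈ WPar n P) :
    (inversions n (v * w)).filter (fun p => SameBlock P p.1 p.2) = inversions n w := by
  ext ⟨i, j⟩
  simp only [Finset.mem_filter, mem_inversions, Equiv.Perm.mul_apply]
  constructor
  · rintro ⟨⟨hij, hvw⟩, hb⟩
    refine ⟨hij, ((w.injective.ne hij.ne').lt_or_gt).resolve_right fun hlt => ?_⟩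
    exact hvw.not_gt (apply_lt_apply_of_mem_minReps hv hlt ((sameBlock_apply_iff hw).2 hb))
  · rintro ⟨hij, hw'⟩
    have hb : SameBlock P i j := by
      by_contra hnb
      exact hw'.not_gt (lt_of_not_sameBlock hij hnb (sameBlock_apply_of_mem_WPar hw i)
        (sameBlock_apply_of_mem_WPar hw j))
    exact ⟨⟨hij, apply_lt_apply_of_mem_minReps hv hw' ((sameBlock_apply_iff hw).2 hb.symm)⟩,
      hb⟩

/-- The inversions of `vw` across blocks are those of `v`, moved by `w`. -/
lemma card_filter_not_sameBlock_inversions_mul {v w : Equiv.Perm (Fin n)}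
    (hv : v ∈ minReps n P) (hw : w ∈ WPar n P) :
    ((inversions n (v * w)).filter (fun p => ¬SameBlock P p.1 p.2)).card =
      (inversions n v).card := by
  have hw' : w⁻¹ ∈ WPar n P := inv_mem hw
  refine Finset.card_nbij' (fun p => (w p.1, w p.2)) (fun p => (w⁻¹ p.1, w⁻¹ p.2))
    (fun ⟨i, j⟩ hp => ?_) (fun ⟨a, b⟩ hp => ?_) (fun p _ => by simp) (fun p _ => by simp)
  · simp only [Finset.coe_filter, Set.mem_ofPred_eq, mem_inversions,
      Equiv.Perm.mul_apply, Finset.mem_coe] at hp ⊢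
    obtain ⟨⟨hij, hvw⟩, hnb⟩ := hp
    exact ⟨lt_of_not_sameBlock hij hnb (sameBlock_apply_of_mem_WPar hw i)
      (sameBlock_apply_of_mem_WPar hw j), hvw⟩
  · simp only [Finset.coe_filter, Set.mem_ofPred_eq, mem_inversions,
      Equiv.Perm.mul_apply, Finset.mem_coe] at hp ⊢
    obtain ⟨hab, hvab⟩ := hp
    have hnb : ¬SameBlock P a b := fun hb => hvab.not_gt (apply_lt_apply_of_mem_minReps hv hab hb)
    exact ⟨⟨lt_of_not_sameBlock hab hnb (sameBlock_apply_of_mem_WPar hw' a)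
      (sameBlock_apply_of_mem_WPar hw' b), by simpa using hvab⟩,
      (sameBlock_apply_iff hw').not.2 hnb⟩

lemma len_mul_of_mem_minReps {v w : Equiv.Perm (Fin n)} (hv : v ∈ minReps n P)
    (hw : w ∈ WPar n P) : len n (v * w) = len n v + len n w := by
  simp only [len_eq_card_inversions]
  rw [← Finset.card_filter_add_card_filter_not (fun p => SameBlock P p.1 p.2),
    filter_sameBlock_inversions_mul hv hw, card_filter_not_sameBlock_inversions_mul hv hw,
    add_comm]

end Parabolic

def billeyIndex (n : ℕ) (b : List (Fin (n - 1))) (v : Equiv.Perm (Fin n)) :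
    Finset (Finset (Fin b.length)) :=
  Finset.univ.filter fun J =>
    J.card = len n v ∧ ((J.sort (· ≤ ·)).map (fun j => sTr n (b.get j))).prod = v

lemma billeyWord_eq_sum (b : List (Fin (n - 1))) (v : Equiv.Perm (Fin n)) :
    billeyWord n b v = ∑ J ∈ billeyIndex n b v, ∏ j ∈ J, rPoly n b j :=
  rfl

lemma rPoly_eq (b : List (Fin (n - 1))) (j : Fin b.length) :
    rPoly n b j = X (wordProd n (b.take j) (lo n (b.get j)))
      - X (wordProd n (b.take j) (hi n (b.get j))) := by
  rw [rPoly, alphaR, map_sub, rename_X, rename_X]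
  rfl

lemma isHomogeneous_rPoly (b : List (Fin (n - 1))) (j : Fin b.length) :
    (rPoly n b j).IsHomogeneous 1 := by
  rw [rPoly_eq]
  exact (isHomogeneous_X _ _).sub (isHomogeneous_X _ _)

lemma isHomogeneous_billeyWord (b : List (Fin (n - 1))) (v : Equiv.Perm (Fin n)) :
    (billeyWord n b v).IsHomogeneous (len n v) := by
  refine IsHomogeneous.sum _ _ _ fun J hJ => ?_
  rw [← (Finset.mem_filter.1 hJ).2.1, Finset.card_eq_sum_ones]
  exact IsHomogeneous.prod J _ _ fun j _ => isHomogeneous_rPoly b j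

lemma isHomogeneous_sigma (v z : Equiv.Perm (Fin n)) :
    (sigma n v z).IsHomogeneous (len n v) := by
  unfold sigma
  split_ifs
  exacts [isHomogeneous_billeyWord _ _, isHomogeneous_zero _ _ _]

open scoped ComplexOrder in
lemma eval_rPoly_pos {b : List (Fin (n - 1))} {z : Equiv.Perm (Fin n)} (hb : IsRedWord n b z)
    (j : Fin b.length) : 0 < eval (fun k : Fin n => -(k : ℂ)) (rPoly n b j) := by
  have := IsRedWord.wordProd_take_lo_lt_hi hb j
  rw [rPoly_eq, map_sub, eval_X, eval_X, neg_sub_neg, sub_pos]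
  exact_mod_cast this

open scoped ComplexOrder in
lemma billeyWord_ne_zero_iff {b : List (Fin (n - 1))} {z : Equiv.Perm (Fin n)}
    (hb : IsRedWord n b z) (v : Equiv.Perm (Fin n)) :
    billeyWord n b v ≠ 0 ↔ (billeyIndex n b v).Nonempty := by
  refine ⟨fun h => Finset.nonempty_iff_ne_empty.2 fun he => h (by simp [billeyWord_eq_sum, he]),
    fun hne h0 => ?_⟩
  have hpos : 0 < eval (fun k : Fin n => -(k : ℂ)) (billeyWord n b v) := by
    rw [billeyWord_eq_sum, map_sum]
    refine Finset.sum_pos (fun J _ => ?_) hne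
    rw [map_prod]
    exact Finset.prod_pos fun j _ => eval_rPoly_pos hb j
  simp [h0] at hpos

lemma billeyIndex_nonempty_of_sublist {b l : List (Fin (n - 1))} {v : Equiv.Perm (Fin n)}
    (hl : l.Sublist b) (hlv : IsRedWord n l v) : (billeyIndex n b v).Nonempty := by
  obtain ⟨f, hf⟩ := List.sublist_iff_exists_fin_orderEmbedding_get_eq.1 hl
  refine ⟨Finset.univ.map f.toEmbedding, Finset.mem_filter.2 ⟨Finset.mem_univ _, ?_, ?_⟩⟩
  · simp [hlv.2]
  · rw [← (f.strictMono.strictMonoOn _).map_finsetSort, Fin.sort_univ, List.map_map,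
      ← List.ofFn_eq_map]
    simp only [Function.comp_def, RelEmbedding.coe_toEmbedding, ← hf]
    simpa using hlv.1

lemma eq_wordProd_of_mem_billeyIndex {b : List (Fin (n - 1))} {u : Equiv.Perm (Fin n)}
    {J : Finset (Fin b.length)} (hJ : J ∈ billeyIndex n b u) (hlen : len n u = b.length) :
    u = wordProd n b := by
  obtain ⟨-, hcard, hprod⟩ := Finset.mem_filter.1 hJ
  obtain rfl : J = Finset.univ := Finset.eq_univ_of_card J (by simp [hcard, hlen])
  rw [← hprod, Fin.sort_univ, ← List.ofFn_eq_map]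
  simp [wordProd]

lemma exists_isRedWord_sigma_eq (z : Equiv.Perm (Fin n)) :
    ∃ b, IsRedWord n b z ∧ ∀ v, sigma n v z = billeyWord n b v := by
  have hex : ∃ b, IsRedWord n b z := exists_isRedWord z
  exact ⟨hex.choose, hex.choose_spec, fun v => by rw [sigma, dif_pos hex]⟩

lemma sigma_ne_zero_of_forall_sublist {v z : Equiv.Perm (Fin n)}
    (h : ∀ b, IsRedWord n b z → ∃ l, l.Sublist b ∧ IsRedWord n l v) :
    sigma n v z ≠ 0 := by
  obtain ⟨b, hb, hσ⟩ := exists_isRedWord_sigma_eq z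
  obtain ⟨l, hl, hlv⟩ := h b hb
  rw [hσ, billeyWord_ne_zero_iff hb]
  exact billeyIndex_nonempty_of_sublist hl hlv

lemma sigma_self_ne_zero (z : Equiv.Perm (Fin n)) : sigma n z z ≠ 0 :=
  sigma_ne_zero_of_forall_sublist fun b hb => ⟨b, List.Sublist.refl b, hb⟩

lemma eq_of_sigma_ne_zero_of_len_eq {u z : Equiv.Perm (Fin n)} (h : sigma n u z ≠ 0)
    (hlen : len n u = len n z) : u = z := by
  obtain ⟨b, hb, hσ⟩ := exists_isRedWord_sigma_eq z
  rw [hσ, billeyWord_ne_zero_iff hb] at h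
  obtain ⟨J, hJ⟩ := h
  exact (eq_wordProd_of_mem_billeyIndex hJ (hlen.trans hb.2.symm)).trans hb.1

end Billey

open Billey

theorem product_eq_single_schubert_general (n : ℕ) (P : Set (Fin (n - 1)))
    (v : Equiv.Perm (Fin n)) (hv : v ∈ minReps n P)
    (w : Equiv.Perm (Fin n)) (hw : w ∈ WPar n P)
    (u : Equiv.Perm (Fin n))
    (h : ∀ z : Equiv.Perm (Fin n), sigma n v z * sigma n w z = sigma n u z) :
    u = v * w := by
  have hvw := len_mul_of_mem_minReps hv hw
  have hu : len n u = len n v + len n w :=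
    (isHomogeneous_sigma u u).inj_right
      (h u ▸ (isHomogeneous_sigma v u).mul (isHomogeneous_sigma w u)) (sigma_self_ne_zero u)
  have hne : sigma n u (v * w) ≠ 0 := by
    rw [← h]
    exact mul_ne_zero
      (sigma_ne_zero_of_forall_sublist fun _ hb => exists_sublist_isRedWord_left hvw hb)
      (sigma_ne_zero_of_forall_sublist fun _ hb => exists_sublist_isRedWord_right hvw hb)
  exact eq_of_sigma_ne_zero_of_len_eq hne (hu.trans hvw.symm)

/-- Fix `P ⊆ {1, …, n-1}`. If `v ∈ W^P`, `w ∈ W_P`, `u ∈ W` and the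
pointwise product `σ_v·σ_w` equals the single Schubert class `σ_u` as functions `W → R`,
then `u = vw`. -/
theorem product_eq_single_schubert (n : ℕ) (hn : 2 ≤ n) (P : Set (Fin (n - 1)))
    (v : Equiv.Perm (Fin n)) (hv : v ∈ minReps n P)
    (w : Equiv.Perm (Fin n)) (hw : w ∈ WPar n P)
    (u : Equiv.Perm (Fin n))
    (h : ∀ z : Equiv.Perm (Fin n), sigma n v z * sigma n w z = sigma n u z) :
    u = v * w :=
  product_eq_single_schubert_general n P v hv w hw u h

end
end
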